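/- arXiv:2007.09876 — 9 statements merged into one kernel-verified Lean document; each statement's English description precedes it below -/
import Mathlib

section
/- Let G be a finite group and let x act on G by a group automorphism of order 2 (i.e., a nontrivial involution). Let S = {g ∈ G : g·x = g} be the fixed-point set and T = {g ∈ G : g·x ≠ g} its complement. If T is nonempty, then S ⊆ T·T, where T·T = {g·h : g, h ∈ T}. -/
section FixedPoints

variable {F : Type*}

theorem map_mul_ne_of_map_eq {M : Type*} [Mul M] [IsLeftCancelMul M] [FunLike F M M]
    [MulHomClass F M M] (f : F) {s t : M} (hs : f s = s) (ht : f t ≠ t) :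
    f (s * t) ≠ s * t := by
  rw [map_mul, hs]
  exact fun h ↦ ht (mul_left_cancel h)

theorem map_inv_ne {G : Type*} [Group G] [FunLike F G G] [MonoidHomClass F G G] (f : F) {t : G}
    (ht : f t ≠ t) : f t⁻¹ ≠ t⁻¹ := by
  rw [map_inv]
  exact fun h ↦ ht (inv_injective h)

end FixedPoints

theorem fixed_subset_nonfixed_mul_nonfixed_general {G : Type*} [Group G] (φ : G ≃* G)
    (hT : ∃ g : G, φ g ≠ g) :
    ∀ s : G, φ s = s → ∃ t₁ t₂ : G, φ t₁ ≠ t₁ ∧ φ t₂ ≠ t₂ ∧ s = t₁ * t₂ := by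
  obtain ⟨t, ht⟩ := hT
  intro s hs
  exact ⟨s * t, t⁻¹, map_mul_ne_of_map_eq φ hs ht, map_inv_ne φ ht,
    (mul_inv_cancel_right s t).symm⟩

/-- Let `G` be a finite group and `φ` a group automorphism with `φ ∘ φ = id` whose set of
non-fixed points `T` is nonempty.  Then every fixed point of `φ` is a product of two
non-fixed points, i.e. `S ⊆ T·T`. -/
theorem fixed_subset_nonfixed_mul_nonfixed {G : Type*} [Group G] [Finite G] (φ : G ≃* G)
    (hφ2 : ∀ g, φ (φ g) = g) (hT : ∃ g : G, φ g ≠ g) :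
    ∀ s : G, φ s = s → ∃ t₁ t₂ : G, φ t₁ ≠ t₁ ∧ φ t₂ ≠ t₂ ∧ s = t₁ * t₂ :=
  fixed_subset_nonfixed_mul_nonfixed_general φ hT
end

section
/- Let G be a finite abelian group with an order-2 automorphism φ, fixed set S and complement T (both nonempty), such that T·T ⊆ S. Then there exists an element b ∈ S with b² = 1 such that φ(t) = t·b for every t ∈ T. -/
/-!
For elements `t`, `u` moved by `φ`, the hypothesis gives `φ t * φ u = t * u`, i.e.
`φ t / t = u / φ u`. Taking `u = t` gives `(φ t / t) ^ 2 = 1`, so `u / φ u = φ u / u` and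
all moved elements share the same `b := φ t / t`. An injective `φ` maps moved elements to moved elements,
hence `φ b = φ (φ t) / φ t = b`.
-/

section MovedElements

variable {G F : Type*} [CommGroup G] [FunLike F G G] [MonoidHomClass F G G] {φ : F}

theorem div_mul_div_self_eq_one_of_map_ne
    (hTT : ∀ t₁ t₂ : G, φ t₁ ≠ t₁ → φ t₂ ≠ t₂ → φ (t₁ * t₂) = t₁ * t₂)
    {t : G} (ht : φ t ≠ t) : φ t / t * (φ t / t) = 1 := by
  rw [div_mul_div_comm, ← map_mul, hTT t t ht ht, div_self']

theorem map_eq_mul_div_of_map_ne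
    (hTT : ∀ t₁ t₂ : G, φ t₁ ≠ t₁ → φ t₂ ≠ t₂ → φ (t₁ * t₂) = t₁ * t₂)
    {t u : G} (ht : φ t ≠ t) (hu : φ u ≠ u) : φ t = t * (φ u / u) := by
  have hb : φ u / u = u / φ u :=
    (eq_inv_of_mul_eq_one_left (div_mul_div_self_eq_one_of_map_ne hTT hu)).trans (inv_div _ _)
  rw [hb, ← mul_div_assoc, eq_div_iff_mul_eq', ← map_mul, hTT t u ht hu]

theorem map_div_self_eq_of_map_ne (hφ : Function.Injective φ)
    (hTT : ∀ t₁ t₂ : G, φ t₁ ≠ t₁ → φ t₂ ≠ t₂ → φ (t₁ * t₂) = t₁ * t₂)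
    {t : G} (ht : φ t ≠ t) : φ (φ t / t) = φ t / t := by
  rw [map_div, map_eq_mul_div_of_map_ne hTT (hφ.ne ht) ht, mul_div_cancel_left]

end MovedElements

theorem exists_translating_element_general {G : Type*} [CommGroup G] (φ : G ≃* G)
    (hTT : ∀ t₁ t₂ : G, φ t₁ ≠ t₁ → φ t₂ ≠ t₂ → φ (t₁ * t₂) = t₁ * t₂) :
    ∃ b : G, φ b = b ∧ b * b = 1 ∧ ∀ t : G, φ t ≠ t → φ t = t * b := by
  by_cases hT : ∃ t₀, φ t₀ ≠ t₀
  · obtain ⟨t₀, ht₀⟩ := hT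
    exact ⟨φ t₀ / t₀, map_div_self_eq_of_map_ne φ.injective hTT ht₀,
      div_mul_div_self_eq_one_of_map_ne hTT ht₀, fun t ht => map_eq_mul_div_of_map_ne hTT ht ht₀⟩
  · push Not at hT
    exact ⟨1, map_one φ, mul_one 1, fun t ht => absurd (hT t) ht⟩

/-- Let `G` be a finite abelian group with an order-2 automorphism `φ`, fixed set `S` and
complement `T` (both nonempty, which holds since `φ ≠ id`), such that `T·T ⊆ S`.  Then
there exists an element `b ∈ S` with `b² = 1` such that `φ(t) = t·b` for every `t ∈ T`. -/
theorem exists_translating_element {G : Type*} [CommGroup G] [Finite G] (φ : G ≃* G)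
    (hφ2 : ∀ g, φ (φ g) = g) (hφ : φ ≠ MulEquiv.refl G)
    (hTT : ∀ t₁ t₂ : G, φ t₁ ≠ t₁ → φ t₂ ≠ t₂ → φ (t₁ * t₂) = t₁ * t₂) :
    ∃ b : G, φ b = b ∧ b * b = 1 ∧ ∀ t : G, φ t ≠ t → φ t = t * b :=
  exists_translating_element_general φ hTT
end

section
/- Let G be a finite abelian group with an order-2 automorphism φ, fixed set S and complement T nonempty, such that T·T ⊆ S. Then |G| is divisible by 4. -/
/-!
The fixed subgroup `S` of `φ` has index two: for `t ∉ S`, every `g ∉ S` satisfies `g * t ∈ S`.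
So `|G| = 2 |S|` is even and it remains to see that `|S|` is even. If it were odd, `S` would
contain no involution, while by Cauchy `G` contains one, `u`, necessarily outside `S`; then
`φ u ∉ S` as well, so `u * φ u` is an involution of `S` (here commutativity is used), hence
trivial, and `φ u = u⁻¹ = u` puts `u` in `S` after all.
-/

def fixedSubgroup {G : Type*} [Group G] (φ : G ≃* G) : Subgroup G :=
  MonoidHom.eqLocus φ.toMonoidHom (MonoidHom.id G)

theorem mem_fixedSubgroup {G : Type*} [Group G] {φ : G ≃* G} {g : G} :
    g ∈ fixedSubgroup φ ↔ φ g = g :=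
  Iff.rfl

theorem fixedSubgroup_ne_top {G : Type*} [Group G] {φ : G ≃* G} (hφ : φ ≠ MulEquiv.refl G) :
    fixedSubgroup φ ≠ ⊤ := fun h =>
  hφ <| MulEquiv.ext fun g => mem_fixedSubgroup.mp (h ▸ Subgroup.mem_top g)

theorem Subgroup.index_eq_two_of_mul_mem {G : Type*} [Group G] {H : Subgroup G} (hH : H ≠ ⊤)
    (hmul : ∀ a b, a ∉ H → b ∉ H → a * b ∈ H) : H.index = 2 := by
  obtain ⟨a, -, ha⟩ := SetLike.exists_of_lt hH.lt_top
  exact index_eq_two_iff_exists_notMem_and'.mpr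
    ⟨a, ha, fun b => or_iff_not_imp_right.mpr (hmul a b ha)⟩

theorem Subgroup.eq_one_of_sq_eq_one_of_odd_card {G : Type*} [Group G] {H : Subgroup G}
    (hH : Odd (Nat.card H)) {x : G} (hxH : x ∈ H) (hx : x ^ 2 = 1) : x = 1 :=
  orderOf_eq_one_iff.mp <| Nat.eq_one_of_dvd_coprimes (Nat.coprime_two_left.mpr hH)
    (orderOf_dvd_of_pow_eq_one hx) (H.orderOf_dvd_natCard hxH)

theorem two_dvd_card_fixedSubgroup {G : Type*} [CommGroup G] [Finite G] (φ : G ≃* G)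
    (hmul : ∀ a b, a ∉ fixedSubgroup φ → b ∉ fixedSubgroup φ → a * b ∈ fixedSubgroup φ)
    (hG : 2 ∣ Nat.card G) : 2 ∣ Nat.card (fixedSubgroup φ) := by
  by_contra hS
  have hinvol : ∀ {x}, x ∈ fixedSubgroup φ → x ^ 2 = 1 → x = 1 :=
    Subgroup.eq_one_of_sq_eq_one_of_odd_card (Nat.odd_iff.mpr (Nat.two_dvd_ne_zero.mp hS))
  obtain ⟨u, hu⟩ := exists_prime_orderOf_dvd_card' 2 hG
  have hu2 : u ^ 2 = 1 := hu ▸ pow_orderOf_eq_one u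
  have hu1 : u ≠ 1 := by rintro rfl; simp at hu
  have hφu2 : φ u ^ 2 = 1 := by rw [← map_pow, hu2, map_one]
  have huS : u ∉ fixedSubgroup φ := fun h => hu1 (hinvol h hu2)
  have hφuS : φ u ∉ fixedSubgroup φ := fun h => (φ.map_ne_one_iff.mpr hu1) (hinvol h hφu2)
  have hprod : u * φ u = 1 :=
    hinvol (hmul u (φ u) huS hφuS) (by rw [mul_pow, hu2, hφu2, one_mul])
  refine huS (mem_fixedSubgroup.mpr ?_)
  calc φ u = u⁻¹ := eq_inv_of_mul_eq_one_right hprod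
    _ = u := inv_eq_of_mul_eq_one_right (by rwa [← sq])

theorem four_dvd_card_general {G : Type*} [CommGroup G] [Finite G] (φ : G ≃* G)
    (hφ : φ ≠ MulEquiv.refl G)
    (hTT : ∀ t₁ t₂ : G, φ t₁ ≠ t₁ → φ t₂ ≠ t₂ → φ (t₁ * t₂) = t₁ * t₂) :
    4 ∣ Nat.card G := by
  have hcard : Nat.card (fixedSubgroup φ) * 2 = Nat.card G := by
    rw [← Subgroup.index_eq_two_of_mul_mem (fixedSubgroup_ne_top hφ) hTT,
      Subgroup.card_mul_index]
  obtain ⟨k, hk⟩ := two_dvd_card_fixedSubgroup φ hTT (hcard ▸ dvd_mul_left 2 _)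
  exact ⟨k, by omega⟩

/-- Let `G` be a finite abelian group with an order-2 automorphism `φ`, fixed set `S` and
complement `T` nonempty (since `φ ≠ id`), such that `T·T ⊆ S`.  Then `4` divides `|G|`. -/
theorem four_dvd_card {G : Type*} [CommGroup G] [Finite G] (φ : G ≃* G)
    (hφ2 : ∀ g, φ (φ g) = g) (hφ : φ ≠ MulEquiv.refl G)
    (hTT : ∀ t₁ t₂ : G, φ t₁ ≠ t₁ → φ t₂ ≠ t₂ → φ (t₁ * t₂) = t₁ * t₂) :
    4 ∣ Nat.card G :=
  four_dvd_card_general φ hφ hTT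
end

section
/- With G = ⟨a,b | a^{2n}=b²=1, ab=ba⟩, σ and τ as in the data of K(8n,σ,τ) (σ invariant under the automorphism a ↦ ab, b ↦ b; τ a unital 2-cocycle with σ(gh)σ(g)^{-1}σ(h)^{-1} = τ(g,h)τ(g◁x,h◁x)), define P_i = ∏_{k=1}^{i-1} τ(a, a^k) for i ≥ 2 and P_0 = P_1 = 1. Then for all i, j ≥ 0: P_{2j}^{2i} / P_{2i}^{2j} = σ(a^{2j})^i / σ(a^{2i})^j. -/
/-- The group `G = Z_{2n} × Z_2`, written additively. -/
abbrev GK (n : ℕ) := ZMod (2 * n) × ZMod 2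

/-- The generator `a` of order `2n`. -/
def aK (n : ℕ) : GK n := (1, 0)

/-- The generator `b` of order `2`. -/
def bK (n : ℕ) : GK n := (0, 1)

/-- The order-2 automorphism `◁x` of `G` determined by `a ↦ ab`, `b ↦ b`. -/
def xK (n : ℕ) : GK n → GK n :=
  fun g => (g.1, g.2 + ZMod.castHom (dvd_mul_right 2 n) (ZMod 2) g.1)

/-- `P i = ∏_{m=1}^{i-1} τ(a, a^m)`, with `P 0 = P 1 = 1`. -/
def PK {k : Type*} [Field k] (n : ℕ) (τ : GK n → GK n → kˣ) (i : ℕ) : kˣ :=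
  ∏ m ∈ Finset.Icc 1 (i - 1), τ (aK n) (m • aK n)

/-!
Iterating the cocycle identity gives `τ(a^i, a^j) P_i P_j = P_{i+j}`. Even powers of `a` are fixed
by `◁x`, so on them the compatibility condition reads `σ(gh) = σ(g) σ(h) τ(g,h)²`. Together,
`f(m) = σ(a^{2m}) / P_{2m}²` satisfies `f(m + l) = f(m) f(l)`, hence `f(ij) = f(j)^i = f(i)^j`,
which is the claimed identity.
-/

theorem map_mul_eq_pow_of_map_add {N : Type*} [LeftCancelMonoid N] {f : ℕ → N}
    (hadd : ∀ m n, f (m + n) = f m * f n) (i j : ℕ) : f (i * j) = f j ^ i := by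
  induction i with
  | zero => simpa using (hadd 0 0).symm
  | succ i ih => rw [Nat.succ_mul, hadd, ih, pow_succ]

section CocycleProd

variable {G M : Type*} [AddMonoid G] [CommMonoid M]

/-- `PK n τ` is, by definition, `cocycleProd τ (aK n)`. -/
def cocycleProd (τ : G → G → M) (a : G) (i : ℕ) : M :=
  ∏ m ∈ Finset.Icc 1 (i - 1), τ a (m • a)

theorem cocycleProd_succ {τ : G → G → M} {a : G} (hτa : τ a 0 = 1) (i : ℕ) :
    cocycleProd τ a (i + 1) = cocycleProd τ a i * τ a (i • a) := by
  cases i with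
  | zero => simp [cocycleProd, hτa]
  | succ m =>
    rw [cocycleProd, cocycleProd, Nat.add_sub_cancel, Nat.add_sub_cancel,
      Finset.prod_Icc_succ_top (by omega)]

theorem cocycle_nsmul_mul_cocycleProd {τ : G → G → M} {a : G}
    (hcoc : ∀ g h l : G, τ g h * τ (g + h) l = τ h l * τ g (h + l))
    (hτa : τ a 0 = 1) (hτ0 : ∀ g : G, τ 0 g = 1) (i j : ℕ) :
    τ (i • a) (j • a) * cocycleProd τ a i * cocycleProd τ a j = cocycleProd τ a (i + j) := by
  induction i with
  | zero => simp [cocycleProd, hτ0]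
  | succ m ih =>
    have h := hcoc a (m • a) (j • a)
    rw [← succ_nsmul', ← add_nsmul] at h
    calc τ ((m + 1) • a) (j • a) * cocycleProd τ a (m + 1) * cocycleProd τ a j
        = τ a (m • a) * τ ((m + 1) • a) (j • a) * cocycleProd τ a m * cocycleProd τ a j := by
          rw [cocycleProd_succ hτa]; ac_rfl
      _ = τ (m • a) (j • a) * cocycleProd τ a m * cocycleProd τ a j * τ a ((m + j) • a) := by
          rw [h]; ac_rfl
      _ = cocycleProd τ a (m + 1 + j) := by
          rw [ih, Nat.add_right_comm, cocycleProd_succ hτa]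

end CocycleProd

section EvenRatio

variable {G M : Type*} [AddMonoid G] [CommGroup M]

theorem map_add_of_isFixedPt {σ : G → M} {τ : G → G → M} {x : G → G}
    (hcompat : ∀ g h : G, σ (g + h) * (σ g)⁻¹ * (σ h)⁻¹ = τ g h * τ (x g) (x h))
    {g h : G} (hg : Function.IsFixedPt x g) (hh : Function.IsFixedPt x h) :
    σ (g + h) = σ g * σ h * τ g h ^ 2 := by
  have := hcompat g h
  rw [hg, hh, mul_inv_eq_iff_eq_mul, mul_inv_eq_iff_eq_mul] at this
  rw [this, sq]; ac_rfl

def evenRatio (σ : G → M) (τ : G → G → M) (a : G) (m : ℕ) : M :=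
  σ ((2 * m) • a) / cocycleProd τ a (2 * m) ^ 2

theorem evenRatio_add {σ : G → M} {τ : G → G → M} {x : G → G} {a : G}
    (hcoc : ∀ g h l : G, τ g h * τ (g + h) l = τ h l * τ g (h + l))
    (hτa : τ a 0 = 1) (hτ0 : ∀ g : G, τ 0 g = 1)
    (hcompat : ∀ g h : G, σ (g + h) * (σ g)⁻¹ * (σ h)⁻¹ = τ g h * τ (x g) (x h))
    (hx : ∀ m : ℕ, Function.IsFixedPt x ((2 * m) • a)) (m n : ℕ) :
    evenRatio σ τ a (m + n) = evenRatio σ τ a m * evenRatio σ τ a n := by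
  rw [evenRatio, evenRatio, evenRatio, mul_add, add_nsmul,
    map_add_of_isFixedPt hcompat (hx m) (hx n), ← cocycle_nsmul_mul_cocycleProd hcoc hτa hτ0]
  simp only [div_eq_mul_inv, mul_pow, mul_inv]
  group
  ac_rfl

end EvenRatio

theorem xK_two_nsmul (n : ℕ) (g : GK n) : xK n (2 • g) = 2 • g := by
  ext
  · rfl
  · simp only [xK, two_nsmul, Prod.fst_add, Prod.snd_add, map_add, CharTwo.add_self_eq_zero]

theorem P_even_ratio_general {k : Type*} [Field k] (n : ℕ)
    (τ : GK n → GK n → kˣ) (σ : GK n → kˣ)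
    (hcoc : ∀ g h l : GK n, τ g h * τ (g + h) l = τ h l * τ g (h + l))
    (hτ1 : ∀ g : GK n, τ g 0 = 1) (hτ1' : ∀ g : GK n, τ 0 g = 1)
    (hcompat : ∀ g h : GK n,
      σ (g + h) * (σ g)⁻¹ * (σ h)⁻¹ = τ g h * τ (xK n g) (xK n h)) :
    ∀ i j : ℕ,
      PK n τ (2 * j) ^ (2 * i) * (PK n τ (2 * i) ^ (2 * j))⁻¹ =
        σ ((2 * j) • aK n) ^ i * (σ ((2 * i) • aK n) ^ j)⁻¹ := by
  intro i j
  have hadd := evenRatio_add (a := aK n) hcoc (hτ1 _) hτ1' hcompat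
    fun m => by rw [Function.IsFixedPt, mul_nsmul', xK_two_nsmul]
  have hsymm : evenRatio σ τ (aK n) j ^ i = evenRatio σ τ (aK n) i ^ j := by
    rw [← map_mul_eq_pow_of_map_add hadd, ← map_mul_eq_pow_of_map_add hadd, Nat.mul_comm i j]
  simp only [evenRatio, div_pow, ← pow_mul] at hsymm
  rw [← div_eq_mul_inv, ← div_eq_mul_inv, div_eq_div_iff_div_eq_div, ← inv_inj, inv_div, inv_div]
  exact hsymm

/-- With the data of `K(8n,σ,τ)`, for all `i, j ≥ 0`:
`P_{2j}^{2i} / P_{2i}^{2j} = σ(a^{2j})^i / σ(a^{2i})^j`. -/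
theorem P_even_ratio {k : Type*} [Field k] (n : ℕ) (hn : 0 < n)
    (τ : GK n → GK n → kˣ) (σ : GK n → kˣ)
    (hcoc : ∀ g h l : GK n, τ g h * τ (g + h) l = τ h l * τ g (h + l))
    (hτ1 : ∀ g : GK n, τ g 0 = 1) (hτ1' : ∀ g : GK n, τ 0 g = 1)
    (hσ1 : σ 0 = 1) (hσx : ∀ g : GK n, σ (xK n g) = σ g)
    (hcompat : ∀ g h : GK n,
      σ (g + h) * (σ g)⁻¹ * (σ h)⁻¹ = τ g h * τ (xK n g) (xK n h)) :
    ∀ i j : ℕ,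
      PK n τ (2 * j) ^ (2 * i) * (PK n τ (2 * i) ^ (2 * j))⁻¹ =
        σ ((2 * j) • aK n) ^ i * (σ ((2 * i) • aK n) ^ j)⁻¹ :=
  P_even_ratio_general n τ σ hcoc hτ1 hτ1' hcompat
end

section
/- With the data of K(8n,σ,τ) and P_i defined as P_i = ∏_{k=1}^{i-1} τ(a,a^k) (P_0 = P_1 = 1), for all i, j ≥ 0 one has P_{2i+1}^{2j} · σ(a)^j · σ(a^{2j})^i = P_{2j}^{2i} · σ(a^{2i+1})^j · (τ(b,a)/τ(b,a^{2i+1}))^j. -/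
/-!
For powers of `a`, the compatibility of `σ` with `τ` at `(a, a^m)`, rewritten with the cocycle
identity, gives `σ(a^{m+1}) = σ(a) σ(a^m) τ(a,a^m)² r_m` with
`r_m = τ(b,a^{m+1}) / τ(b,a)` for even `m` (then `a^m` is fixed by `◁x`) and
`r_m = τ(b,b) / (τ(a,b) τ(b,a^m))` for odd `m` (then `a^m ◁ x = a^m b`, and comparing the
compatibility at `(b,g)` and `(g,b)` gives `τ(b,g) τ(b,gb) = τ(g,b) τ(gb,b) = τ(b,b)`).
In `r_{2m} r_{2m+1}` the factors `τ(b,a^{2m+1})` cancel, so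
`σ(a^{2m}) = σ(a)^{2m} P_{2m}² c^m` with `c = τ(b,b) / (τ(a,b) τ(b,a))`, and one more step gives
`σ(a^{2m+1})`. Substituting both closed forms turns the relation into an identity in the abelian
group `kˣ`.
-/

section Cocycle

variable {G M : Type*} [AddCommGroup G] [CommGroup M] {τ : G → G → M} {σ : G → M} {x : G → G}

theorem sigma_add_eq
    (hcompat : ∀ g h, σ (g + h) * (σ g)⁻¹ * (σ h)⁻¹ = τ g h * τ (x g) (x h)) (g h : G) :
    σ (g + h) = σ g * σ h * (τ g h * τ (x g) (x h)) := by
  rw [← hcompat, mul_comm (σ g * σ h), mul_assoc (σ (g + h)), ← mul_inv, inv_mul_cancel_right]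

theorem sigma_add_mul_tau_of_map_eq_self
    (hcoc : ∀ g h l, τ g h * τ (g + h) l = τ h l * τ g (h + l))
    (hcompat : ∀ g h, σ (g + h) * (σ g)⁻¹ * (σ h)⁻¹ = τ g h * τ (x g) (x h))
    {a b g : G} (hxa : x a = a + b) (hxg : x g = g) :
    σ (a + g) * τ b a = σ a * σ g * τ a g ^ 2 * τ b (a + g) := by
  have hcocycle : τ b a * τ (a + b) g = τ a g * τ b (a + g) := by
    rw [add_comm a b]
    exact hcoc b a g
  rw [sigma_add_eq hcompat, hxa, hxg]
  calc σ a * σ g * (τ a g * τ (a + b) g) * τ b a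
      = σ a * σ g * τ a g * (τ b a * τ (a + b) g) := by ac_rfl
    _ = _ := by rw [hcocycle, sq]; ac_rfl

theorem tau_mul_tau_add_eq_tau_self
    (hcoc : ∀ g h l, τ g h * τ (g + h) l = τ h l * τ g (h + l))
    (hcompat : ∀ g h, σ (g + h) * (σ g)⁻¹ * (σ h)⁻¹ = τ g h * τ (x g) (x h))
    {b g : G} (hb : b + b = 0) (hxb : x b = b) (hxg : x g = g + b) (hτg : τ g 0 = 1) :
    τ b g * τ b (g + b) = τ b b := by
  have hsymm : τ b g * τ b (g + b) = τ g b * τ (g + b) b := by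
    have h := (sigma_add_eq hcompat b g).symm.trans (add_comm b g ▸ sigma_add_eq hcompat g b)
    rw [mul_comm (σ g), hxb, hxg] at h
    exact mul_left_cancel h
  rw [hsymm, hcoc g b b, hb, hτg, mul_one]

theorem sigma_add_mul_tau_of_map_eq_add
    (hcoc : ∀ g h l, τ g h * τ (g + h) l = τ h l * τ g (h + l))
    (hcompat : ∀ g h, σ (g + h) * (σ g)⁻¹ * (σ h)⁻¹ = τ g h * τ (x g) (x h))
    {a b g : G} (hb : b + b = 0) (hxa : x a = a + b) (hxb : x b = b) (hxg : x g = g + b)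
    (hτg : τ g 0 = 1) :
    σ (a + g) * τ a b * τ b g = σ a * σ g * τ a g ^ 2 * τ b b := by
  have hcocycle : τ a b * τ (a + b) (g + b) = τ b (g + b) * τ a g := by
    have h := hcoc a b (g + b)
    rwa [add_left_comm, hb, add_zero] at h
  rw [← tau_mul_tau_add_eq_tau_self hcoc hcompat hb hxb hxg hτg, sigma_add_eq hcompat, hxa, hxg]
  calc σ a * σ g * (τ a g * τ (a + b) (g + b)) * τ a b * τ b g
      = σ a * σ g * τ a g * (τ a b * τ (a + b) (g + b)) * τ b g := by ac_rfl
    _ = _ := by rw [hcocycle, sq]; ac_rfl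

end Cocycle

section GK

variable {n : ℕ}

theorem bK_add_self : bK n + bK n = 0 := by
  ext <;> simp [bK]; decide

theorem xK_bK : xK n (bK n) = bK n := by
  ext <;> simp [xK, bK]

theorem xK_nsmul_aK (m : ℕ) : xK n (m • aK n) = m • aK n + m • bK n := by
  ext <;> simp [xK, aK, bK]

theorem xK_two_mul_nsmul_aK (m : ℕ) : xK n ((2 * m) • aK n) = (2 * m) • aK n := by
  rw [xK_nsmul_aK, mul_nsmul (bK n), two_nsmul, bK_add_self, nsmul_zero, add_zero]

theorem xK_two_mul_add_one_nsmul_aK (m : ℕ) :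
    xK n ((2 * m + 1) • aK n) = (2 * m + 1) • aK n + bK n := by
  rw [xK_nsmul_aK, succ_nsmul (bK n), mul_nsmul (bK n), two_nsmul, bK_add_self, nsmul_zero,
    zero_add]

theorem xK_aK : xK n (aK n) = aK n + bK n := by
  simpa using xK_two_mul_add_one_nsmul_aK (n := n) 0

variable {k : Type*} [Field k] {τ : GK n → GK n → kˣ} {σ : GK n → kˣ}

theorem PK_succ (hτ1 : ∀ g, τ g 0 = 1) (m : ℕ) :
    PK n τ (m + 1) = PK n τ m * τ (aK n) (m • aK n) := by
  cases m with
  | zero => simp [PK, hτ1]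
  | succ m => exact Finset.prod_Icc_succ_top (by omega) _

theorem sigma_nsmul_aK
    (hcoc : ∀ g h l, τ g h * τ (g + h) l = τ h l * τ g (h + l)) (hτ1 : ∀ g, τ g 0 = 1)
    (hσ1 : σ 0 = 1)
    (hcompat : ∀ g h, σ (g + h) * (σ g)⁻¹ * (σ h)⁻¹ = τ g h * τ (xK n g) (xK n h)) (m : ℕ) :
    σ ((2 * m) • aK n) = σ (aK n) ^ (2 * m) * PK n τ (2 * m) ^ 2 *
        (τ (bK n) (bK n) / (τ (aK n) (bK n) * τ (bK n) (aK n))) ^ m ∧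
      σ ((2 * m + 1) • aK n) = σ (aK n) ^ (2 * m + 1) * PK n τ (2 * m + 1) ^ 2 *
        (τ (bK n) (bK n) / (τ (aK n) (bK n) * τ (bK n) (aK n))) ^ m *
        (τ (bK n) ((2 * m + 1) • aK n) / τ (bK n) (aK n)) := by
  set c := τ (bK n) (bK n) / (τ (aK n) (bK n) * τ (bK n) (aK n)) with hc
  have odd_of_even : ∀ m : ℕ, σ ((2 * m) • aK n) = σ (aK n) ^ (2 * m) * PK n τ (2 * m) ^ 2 * c ^ m →
      σ ((2 * m + 1) • aK n) = σ (aK n) ^ (2 * m + 1) * PK n τ (2 * m + 1) ^ 2 * c ^ m *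
        (τ (bK n) ((2 * m + 1) • aK n) / τ (bK n) (aK n)) := by
    intro m heven
    have h := sigma_add_mul_tau_of_map_eq_self hcoc hcompat xK_aK (xK_two_mul_nsmul_aK m)
    rw [← succ_nsmul'] at h
    rw [eq_div_of_mul_eq' h, heven, PK_succ hτ1]
    -- in `Additive kˣ`, `module` normalizes sums with symbolic natural coefficients
    apply Additive.ofMul.injective
    simp only [ofMul_mul, ofMul_div, ofMul_pow]
    module
  have even_succ_of_odd : ∀ m : ℕ, σ ((2 * m + 1) • aK n) = σ (aK n) ^ (2 * m + 1) *
        PK n τ (2 * m + 1) ^ 2 * c ^ m * (τ (bK n) ((2 * m + 1) • aK n) / τ (bK n) (aK n)) →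
      σ ((2 * (m + 1)) • aK n) = σ (aK n) ^ (2 * (m + 1)) * PK n τ (2 * (m + 1)) ^ 2 *
        c ^ (m + 1) := by
    intro m hodd
    have h := sigma_add_mul_tau_of_map_eq_add hcoc hcompat bK_add_self xK_aK xK_bK
      (xK_two_mul_add_one_nsmul_aK m) (hτ1 _)
    rw [← succ_nsmul', mul_assoc] at h
    rw [show 2 * (m + 1) = 2 * m + 1 + 1 by ring, eq_div_of_mul_eq' h, hodd,
      PK_succ hτ1 (2 * m + 1), hc]
    apply Additive.ofMul.injective
    simp only [ofMul_mul, ofMul_div, ofMul_pow]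
    module
  have even : ∀ m : ℕ, σ ((2 * m) • aK n) = σ (aK n) ^ (2 * m) * PK n τ (2 * m) ^ 2 * c ^ m := by
    intro m
    induction m with
    | zero => simp [hσ1, PK]
    | succ m ih => exact even_succ_of_odd m (odd_of_even m ih)
  exact ⟨even m, odd_of_even m (even m)⟩

end GK

theorem P_odd_relation_general {k : Type*} [Field k] (n : ℕ)
    (τ : GK n → GK n → kˣ) (σ : GK n → kˣ)
    (hcoc : ∀ g h l : GK n, τ g h * τ (g + h) l = τ h l * τ g (h + l))
    (hτ1 : ∀ g : GK n, τ g 0 = 1)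
    (hσ1 : σ 0 = 1)
    (hcompat : ∀ g h : GK n,
      σ (g + h) * (σ g)⁻¹ * (σ h)⁻¹ = τ g h * τ (xK n g) (xK n h)) :
    ∀ i j : ℕ,
      PK n τ (2 * i + 1) ^ (2 * j) * σ (aK n) ^ j * σ ((2 * j) • aK n) ^ i =
        PK n τ (2 * j) ^ (2 * i) * σ ((2 * i + 1) • aK n) ^ j *
          (τ (bK n) (aK n) * (τ (bK n) ((2 * i + 1) • aK n))⁻¹) ^ j := by
  intro i j
  rw [(sigma_nsmul_aK hcoc hτ1 hσ1 hcompat j).1, (sigma_nsmul_aK hcoc hτ1 hσ1 hcompat i).2]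
  apply Additive.ofMul.injective
  simp only [ofMul_mul, ofMul_div, ofMul_inv, ofMul_pow]
  module

/-- With the data of `K(8n,σ,τ)`, for all `i, j ≥ 0`:
`P_{2i+1}^{2j} · σ(a)^j · σ(a^{2j})^i = P_{2j}^{2i} · σ(a^{2i+1})^j · (τ(b,a)/τ(b,a^{2i+1}))^j`. -/
theorem P_odd_relation {k : Type*} [Field k] (n : ℕ) (hn : 0 < n)
    (τ : GK n → GK n → kˣ) (σ : GK n → kˣ)
    (hcoc : ∀ g h l : GK n, τ g h * τ (g + h) l = τ h l * τ g (h + l))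
    (hτ1 : ∀ g : GK n, τ g 0 = 1) (hτ1' : ∀ g : GK n, τ 0 g = 1)
    (hσ1 : σ 0 = 1) (hσx : ∀ g : GK n, σ (xK n g) = σ g)
    (hcompat : ∀ g h : GK n,
      σ (g + h) * (σ g)⁻¹ * (σ h)⁻¹ = τ g h * τ (xK n g) (xK n h)) :
    ∀ i j : ℕ,
      PK n τ (2 * i + 1) ^ (2 * j) * σ (aK n) ^ j * σ ((2 * j) • aK n) ^ i =
        PK n τ (2 * j) ^ (2 * i) * σ ((2 * i + 1) • aK n) ^ j *
          (τ (bK n) (aK n) * (τ (bK n) ((2 * i + 1) • aK n))⁻¹) ^ j :=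
  P_odd_relation_general n τ σ hcoc hτ1 hσ1 hcompat
end

section
/- With the data of K(8n,σ,τ), define h(t₁,t₂) = τ(t₁,t₂)/τ(t₂◁x, t₁◁x) for t₁, t₂ in the set T of non-fixed points of ◁x. Then h(t₁,t₂)·h(t₁◁x, t₂◁x) = 1 and h(t₁,t₂) = h(t₂,t₁) for all t₁, t₂ ∈ T. -/
/-- `h(t₁,t₂) = τ(t₁,t₂)/τ(t₂◁x, t₁◁x)` for `t₁, t₂` in the set `T` of non-fixed points. -/
def hK {k : Type*} [Field k] (n : ℕ) (τ : GK n → GK n → kˣ) (t₁ t₂ : GK n) : kˣ :=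
  τ t₁ t₂ * (τ (xK n t₂) (xK n t₁))⁻¹

lemma xK_involutive (n : ℕ) : Function.Involutive (xK n) := by
  intro g
  simp [xK, add_assoc, CharTwo.add_self_eq_zero]

lemma mul_twist_comm_of_compat {G M : Type*} [AddCommMagma G] [CommGroup M] (x : G → G)
    (τ : G → G → M) (σ : G → M)
    (hcompat : ∀ g h : G, σ (g + h) * (σ g)⁻¹ * (σ h)⁻¹ = τ g h * τ (x g) (x h)) (g h : G) :
    τ g h * τ (x g) (x h) = τ h g * τ (x h) (x g) := by
  rw [← hcompat, ← hcompat, add_comm h g, mul_right_comm]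

section

variable {k : Type*} [Field k] {n : ℕ} {τ : GK n → GK n → kˣ}

lemma hK_mul_hK_xK (hsymm : ∀ g h, τ g h * τ (xK n g) (xK n h) = τ h g * τ (xK n h) (xK n g))
    (t₁ t₂ : GK n) : hK n τ t₁ t₂ * hK n τ (xK n t₁) (xK n t₂) = 1 := by
  rw [hK, hK, xK_involutive, xK_involutive, mul_mul_mul_comm, hsymm, ← mul_inv_rev,
    mul_inv_cancel]

lemma hK_comm (hsymm : ∀ g h, τ g h * τ (xK n g) (xK n h) = τ h g * τ (xK n h) (xK n g))
    (t₁ t₂ : GK n) : hK n τ t₁ t₂ = hK n τ t₂ t₁ := by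
  rw [hK, hK, mul_inv_eq_iff_eq_mul, mul_right_comm, eq_mul_inv_iff_mul_eq, hsymm]

end

theorem hK_symm_general {k : Type*} [Field k] (n : ℕ)
    (τ : GK n → GK n → kˣ) (σ : GK n → kˣ)
    (hcompat : ∀ g h : GK n,
      σ (g + h) * (σ g)⁻¹ * (σ h)⁻¹ = τ g h * τ (xK n g) (xK n h)) :
    ∀ t₁ t₂ : GK n, xK n t₁ ≠ t₁ → xK n t₂ ≠ t₂ →
      hK n τ t₁ t₂ * hK n τ (xK n t₁) (xK n t₂) = 1 ∧
        hK n τ t₁ t₂ = hK n τ t₂ t₁ := by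
  intro t₁ t₂ _ _
  have hsymm := mul_twist_comm_of_compat (xK n) τ σ hcompat
  exact ⟨hK_mul_hK_xK hsymm t₁ t₂, hK_comm hsymm t₁ t₂⟩

/-- With the data of `K(8n,σ,τ)`, for `t₁, t₂ ∈ T = {g : g◁x ≠ g}` one has
`h(t₁,t₂)·h(t₁◁x, t₂◁x) = 1` and `h(t₁,t₂) = h(t₂,t₁)`. -/
theorem hK_symm {k : Type*} [Field k] (n : ℕ) (hn : 0 < n)
    (τ : GK n → GK n → kˣ) (σ : GK n → kˣ)
    (hcoc : ∀ g h l : GK n, τ g h * τ (g + h) l = τ h l * τ g (h + l))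
    (hτ1 : ∀ g : GK n, τ g 0 = 1) (hτ1' : ∀ g : GK n, τ 0 g = 1)
    (hσ1 : σ 0 = 1) (hσx : ∀ g : GK n, σ (xK n g) = σ g)
    (hcompat : ∀ g h : GK n,
      σ (g + h) * (σ g)⁻¹ * (σ h)⁻¹ = τ g h * τ (xK n g) (xK n h)) :
    ∀ t₁ t₂ : GK n, xK n t₁ ≠ t₁ → xK n t₂ ≠ t₂ →
      hK n τ t₁ t₂ * hK n τ (xK n t₁) (xK n t₂) = 1 ∧
        hK n τ t₁ t₂ = hK n τ t₂ t₁ :=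
  hK_symm_general n τ σ hcompat
end

section
/- Let H = k^G #_{σ,τ} kZ₂ with fixed set S and non-fixed set T of the action ◁x, and suppose R = Σ w¹(g,h) e_g⊗e_h + Σ w²(g,h) e_g x⊗e_h + Σ w³(g,h) e_g⊗e_h x + Σ w⁴(g,h) e_g x⊗e_h x satisfies Δ(e_g)R = RΔ(e_g) for all g ∈ G. Then w²(t,g) = 0 for all t ∈ T, g ∈ G; w³(g,t) = 0 for all t ∈ T, g ∈ G; and w⁴(s,t) = w⁴(t,s) = 0 for all s ∈ S, t ∈ T. -/
/-
The Hopf algebra `H = k^G #_{σ,τ} kZ₂` has basis `{e_g, e_g x}_{g ∈ G}`, indexed by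
`G × Bool` (`(g, false) ↔ e_g`, `(g, true) ↔ e_g x`).  Multiplication:
`e_g e_h = δ_{g,h} e_g`, `e_g (e_h x) = δ_{g,h} e_h x`, `(e_g x) e_h = δ_{g,h◁x} e_g x`,
`(e_g x)(e_h x) = δ_{g,h◁x} σ(g) e_g`.  Elements of `H ⊗ H` are functions
`(G × Bool) × (G × Bool) → k`.
-/

/-- Structure constants of the multiplication of `H`: the coefficient of the basis
element `v` in the product of basis elements `u · w`. -/
def mcK {k G : Type*} [Field k] [DecidableEq G] (φ : G → G) (σ : G → kˣ)
    (u w v : G × Bool) : k :=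
  match u.2, w.2 with
  | false, false => if u.1 = w.1 ∧ v = u then 1 else 0
  | false, true  => if u.1 = w.1 ∧ v = w then 1 else 0
  | true,  false => if u.1 = φ w.1 ∧ v = u then 1 else 0
  | true,  true  => if u.1 = φ w.1 ∧ v = (u.1, false) then (σ u.1 : k) else 0

/-- Multiplication on `H ⊗ H`. -/
def mul2K {k G : Type*} [Field k] [Fintype G] [DecidableEq G] (φ : G → G) (σ : G → kˣ)
    (F F' : (G × Bool) × (G × Bool) → k) : (G × Bool) × (G × Bool) → k :=
  fun v => ∑ u : (G × Bool) × (G × Bool), ∑ w : (G × Bool) × (G × Bool),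
    mcK φ σ u.1 w.1 v.1 * mcK φ σ u.2 w.2 v.2 * F u * F' w

/-- `Δ(e_g) = ∑_{hk=g} e_h ⊗ e_k` as an element of `H ⊗ H`. -/
def DeltaE {k G : Type*} [Field k] [CommGroup G] [DecidableEq G] (g : G) :
    (G × Bool) × (G × Bool) → k :=
  fun p => if p.1.2 = false ∧ p.2.2 = false ∧ p.1.1 * p.2.1 = g then 1 else 0

/-- The element `R = ∑ w¹(g,h) e_g⊗e_h + ∑ w²(g,h) e_g x⊗e_h + ∑ w³(g,h) e_g⊗e_h x
+ ∑ w⁴(g,h) e_g x⊗e_h x` of `H ⊗ H`. -/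
def Rmat {k G : Type*} [Field k] (w1 w2 w3 w4 : G → G → k) :
    (G × Bool) × (G × Bool) → k :=
  fun p => match p.1.2, p.2.2 with
  | false, false => w1 p.1.1 p.2.1
  | true,  false => w2 p.1.1 p.2.1
  | false, true  => w3 p.1.1 p.2.1
  | true,  true  => w4 p.1.1 p.2.1

/-!
Multiplying a tensor on the left by `Δ(e_g)` keeps exactly its components
`e_a x^α ⊗ e_b x^β` with `a b = g`, while multiplying on the right keeps those with
`(a ◁ x^α) (b ◁ x^β) = g`, because `x e_h = e_{h ◁ x} x`. So if `R` commutes with every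
`Δ(e_g)`, each of its components with `(a ◁ x^α) (b ◁ x^β) ≠ a b` vanishes; for the listed
components this inequality is `t ◁ x ≠ t`.
-/

/-- `xPow φ β g` is `g ◁ x^β`. -/
def xPow {G : Type*} (φ : G → G) : Bool → G → G
  | false, g => g
  | true, g => φ g

section Structure

variable {k G : Type*} [Field k] [DecidableEq G] (φ : G → G) (σ : G → kˣ)

lemma mcK_idem_left (a : G) (w v : G × Bool) :
    mcK φ σ (a, false) w v = if a = w.1 ∧ v = w then 1 else 0 := by
  obtain ⟨b, _ | _⟩ := w <;> grind [mcK]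

lemma mcK_idem_right (hinv : ∀ g : G, φ (φ g) = g) (u : G × Bool) (b : G) (v : G × Bool) :
    mcK φ σ u (b, false) v = if xPow φ u.2 u.1 = b ∧ v = u then 1 else 0 := by
  obtain ⟨a, _ | _⟩ := u
  · rfl
  · have hφ : a = φ b ↔ φ a = b := ⟨fun h => h ▸ hinv b, fun h => h ▸ (hinv a).symm⟩
    simp only [mcK, xPow, hφ]
    congr

end Structure

section Projection

variable {k G : Type*} [Field k] [CommGroup G] [Fintype G] [DecidableEq G]
  (φ : G → G) (σ : G → kˣ)

lemma mul2K_DeltaE_left_apply (g : G) (F : (G × Bool) × (G × Bool) → k)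
    (v : (G × Bool) × (G × Bool)) :
    mul2K φ σ (DeltaE g) F v = if v.1.1 * v.2.1 = g then F v else 0 := by
  have summand : ∀ u w : (G × Bool) × (G × Bool),
      mcK φ σ u.1 w.1 v.1 * mcK φ σ u.2 w.2 v.2 * DeltaE g u * F w =
        if u = ((v.1.1, false), (v.2.1, false)) ∧ w = v then
          (if v.1.1 * v.2.1 = g then F v else 0) else 0 := by
    rintro ⟨⟨a, _ | _⟩, ⟨b, _ | _⟩⟩ ⟨⟨c, γ⟩, ⟨d, δ⟩⟩ <;>
      grind [DeltaE, mcK_idem_left]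
  simp [mul2K, summand, ite_and, Finset.sum_ite_eq']

lemma mul2K_DeltaE_right_apply (hinv : ∀ g : G, φ (φ g) = g) (g : G)
    (F : (G × Bool) × (G × Bool) → k) (v : (G × Bool) × (G × Bool)) :
    mul2K φ σ F (DeltaE g) v =
      if xPow φ v.1.2 v.1.1 * xPow φ v.2.2 v.2.1 = g then F v else 0 := by
  have summand : ∀ u w : (G × Bool) × (G × Bool),
      mcK φ σ u.1 w.1 v.1 * mcK φ σ u.2 w.2 v.2 * F u * DeltaE g w =
        if u = v ∧ w = ((xPow φ v.1.2 v.1.1, false), (xPow φ v.2.2 v.2.1, false)) then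
          (if xPow φ v.1.2 v.1.1 * xPow φ v.2.2 v.2.1 = g then F v else 0) else 0 := by
    rintro ⟨⟨a, α⟩, ⟨b, β⟩⟩ ⟨⟨c, _ | _⟩, ⟨d, _ | _⟩⟩ <;>
      grind [DeltaE, mcK_idem_right φ σ hinv]
  simp [mul2K, summand, ite_and, Finset.sum_ite_eq']

lemma apply_eq_zero_of_forall_DeltaE_comm (hinv : ∀ g : G, φ (φ g) = g)
    {F : (G × Bool) × (G × Bool) → k}
    (hF : ∀ g : G, mul2K φ σ (DeltaE g) F = mul2K φ σ F (DeltaE g))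
    (v : (G × Bool) × (G × Bool))
    (hv : xPow φ v.1.2 v.1.1 * xPow φ v.2.2 v.2.1 ≠ v.1.1 * v.2.1) : F v = 0 := by
  have h := congrFun (hF (v.1.1 * v.2.1)) v
  rwa [mul2K_DeltaE_left_apply, mul2K_DeltaE_right_apply φ σ hinv, if_pos rfl, if_neg hv] at h

end Projection

theorem R_coefficient_vanishing_general {k G : Type*} [Field k] [CommGroup G] [Fintype G]
    [DecidableEq G] (φ : G → G)
    (hinv : ∀ g : G, φ (φ g) = g)
    (σ : G → kˣ) (w1 w2 w3 w4 : G → G → k)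
    (hcomm : ∀ g : G,
      mul2K φ σ (DeltaE g) (Rmat w1 w2 w3 w4) =
        mul2K φ σ (Rmat w1 w2 w3 w4) (DeltaE g)) :
    (∀ t g : G, φ t ≠ t → w2 t g = 0) ∧
    (∀ g t : G, φ t ≠ t → w3 g t = 0) ∧
    (∀ s t : G, φ s = s → φ t ≠ t → w4 s t = 0 ∧ w4 t s = 0) := by
  have vanish := apply_eq_zero_of_forall_DeltaE_comm φ σ hinv hcomm
  refine ⟨fun t g ht => ?_, fun g t ht => ?_, fun s t hs ht => ⟨?_, ?_⟩⟩
  · exact vanish ((t, true), (g, false)) (by simpa [xPow] using ht)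
  · exact vanish ((g, false), (t, true)) (by simpa [xPow] using ht)
  · exact vanish ((s, true), (t, true)) (by simpa [xPow, hs] using ht)
  · exact vanish ((t, true), (s, true)) (by simpa [xPow, hs] using ht)

/-- If `R` commutes with all `Δ(e_g)`, then `w²(t,g) = 0` and `w³(g,t) = 0` for all
non-fixed `t` and all `g`, and `w⁴(s,t) = w⁴(t,s) = 0` for fixed `s` and non-fixed `t`. -/
theorem R_coefficient_vanishing {k G : Type*} [Field k] [CommGroup G] [Fintype G]
    [DecidableEq G] (φ : G → G)
    (hhom : ∀ g h : G, φ (g * h) = φ g * φ h) (hinv : ∀ g : G, φ (φ g) = g)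
    (σ : G → kˣ) (w1 w2 w3 w4 : G → G → k)
    (hcomm : ∀ g : G,
      mul2K φ σ (DeltaE g) (Rmat w1 w2 w3 w4) =
        mul2K φ σ (Rmat w1 w2 w3 w4) (DeltaE g)) :
    (∀ t g : G, φ t ≠ t → w2 t g = 0) ∧
    (∀ g t : G, φ t ≠ t → w3 g t = 0) ∧
    (∀ s t : G, φ s = s → φ t ≠ t → w4 s t = 0 ∧ w4 t s = 0) :=
  R_coefficient_vanishing_general φ hinv σ w1 w2 w3 w4 hcomm
end

section
/- Let H = k^G #_{σ,τ} kZ₂ with |G| odd. Then every quasitriangular structure (universal R-matrix) R on H is of trivial form, i.e., R = Σ_{g,h∈G} w(g,h) e_g ⊗ e_h for some function w : G×G → k. -/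
/-- Coefficient of `e_u ⊗ e_w` in `Δ` of the basis element indexed by `v`. -/
def Dcoef {k G : Type*} [Field k] [CommGroup G] [DecidableEq G]
    (τ : G → G → kˣ) (v u w : G × Bool) : k :=
  if v.2 then
    (if u.2 = true ∧ w.2 = true ∧ u.1 * w.1 = v.1 then (τ u.1 w.1 : k) else 0)
  else
    (if u.2 = false ∧ w.2 = false ∧ u.1 * w.1 = v.1 then 1 else 0)

/-- Multiplication on `H ⊗ H ⊗ H`. -/
def mul3K {k G : Type*} [Field k] [Fintype G] [DecidableEq G] (φ : G → G) (σ : G → kˣ)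
    (F F' : (G × Bool) × (G × Bool) × (G × Bool) → k) :
    (G × Bool) × (G × Bool) × (G × Bool) → k :=
  fun v => ∑ u : (G × Bool) × (G × Bool) × (G × Bool),
    ∑ w : (G × Bool) × (G × Bool) × (G × Bool),
      mcK φ σ u.1 w.1 v.1 * mcK φ σ u.2.1 w.2.1 v.2.1 * mcK φ σ u.2.2 w.2.2 v.2.2 *
        F u * F' w

/-- The unit `1 = ∑_g e_g` of `H`. -/
def oneHK {k G : Type*} [Field k] : G × Bool → k :=
  fun v => if v.2 = false then 1 else 0

/-- The unit of `H ⊗ H`. -/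
def one2K {k G : Type*} [Field k] : (G × Bool) × (G × Bool) → k :=
  fun p => (oneHK p.1 : k) * (oneHK p.2 : k)

/-- The comultiplication `Δ : H → H ⊗ H` as a linear map on coefficients. -/
def DeltaMap {k G : Type*} [Field k] [CommGroup G] [Fintype G] [DecidableEq G]
    (τ : G → G → kˣ) (f : G × Bool → k) : (G × Bool) × (G × Bool) → k :=
  fun p => ∑ v : G × Bool, Dcoef τ v p.1 p.2 * f v

/-- `(Δ ⊗ id)(R) ∈ H^{⊗3}`. -/
def DelIdK {k G : Type*} [Field k] [CommGroup G] [Fintype G] [DecidableEq G]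
    (τ : G → G → kˣ) (R : (G × Bool) × (G × Bool) → k) :
    (G × Bool) × (G × Bool) × (G × Bool) → k :=
  fun t => ∑ v : G × Bool, Dcoef τ v t.1 t.2.1 * R (v, t.2.2)

/-- `(id ⊗ Δ)(R) ∈ H^{⊗3}`. -/
def IdDelK {k G : Type*} [Field k] [CommGroup G] [Fintype G] [DecidableEq G]
    (τ : G → G → kˣ) (R : (G × Bool) × (G × Bool) → k) :
    (G × Bool) × (G × Bool) × (G × Bool) → k :=
  fun t => ∑ v : G × Bool, Dcoef τ v t.2.1 t.2.2 * R (t.1, v)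

/-- `R₁₃ ∈ H^{⊗3}`. -/
def R13K {k G : Type*} [Field k] (R : (G × Bool) × (G × Bool) → k) :
    (G × Bool) × (G × Bool) × (G × Bool) → k :=
  fun v => R (v.1, v.2.2) * (oneHK v.2.1 : k)

/-- `R₂₃ ∈ H^{⊗3}`. -/
def R23K {k G : Type*} [Field k] (R : (G × Bool) × (G × Bool) → k) :
    (G × Bool) × (G × Bool) × (G × Bool) → k :=
  fun v => (oneHK v.1 : k) * R (v.2.1, v.2.2)

/-- `R₁₂ ∈ H^{⊗3}`. -/
def R12K {k G : Type*} [Field k] (R : (G × Bool) × (G × Bool) → k) :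
    (G × Bool) × (G × Bool) × (G × Bool) → k :=
  fun v => R (v.1, v.2.1) * (oneHK v.2.2 : k)

/-!
Write `γ(c)` and `δ(c)` for the coefficients of `e_1 x ⊗ e_c` and `e_1 x ⊗ e_c x` in `R`.
Applying `ε` to one leg of the two multiplicativity axioms and cancelling the invertible `R` gives
`(ε ⊗ id)(R) = 1 = (id ⊗ ε)(R)`. Comparing `Δ^op(e_g) R` with `R Δ(e_g)` shows that the coefficient
of `e_a x^β ⊗ e_c x^γ` vanishes unless `(a ◁ x^β)(c ◁ x^γ) = ac`; since `◁x ≠ id`, neither `δ` nor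
`c ↦ [e_a ⊗ e_c x]R` can be nowhere zero. If `δ(c₀) ≠ 0`, then `(id ⊗ Δ)(R) = R₁₃R₁₂` forces
`2γ = 1`, while `(Δ ⊗ id)(R) = R₁₃R₂₃` forces `γ(c)² = γ(c)` wherever `δ(c) = 0`; so `δ = 0`.
Then `γ` is idempotent-valued with `γ(bc) = γ(b) ⊻ γ(c)`, a homomorphism `G → ℤ/2`, hence zero
as `|G|` is odd. Now `(Δ ⊗ id)(R) = R₁₃R₂₃` at `e_1 x` kills every coefficient with `x` in the
first leg. Finally, by `(id ⊗ ε)(R) = 1`, the coefficients of `e_a ⊗ e_c x` vanish unless the one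
of `e_a ⊗ e_1 x` equals `1`, in which case `(id ⊗ Δ)(R) = R₁₃R₁₂` makes all of them nonzero.
-/

section Algebra

variable {k G : Type*} [Field k] [Fintype G] [DecidableEq G] {φ : G → G} {σ : G → kˣ}

variable (φ σ) in
def mulHK (f g : G × Bool → k) : G × Bool → k :=
  fun v => ∑ u : G × Bool, ∑ w : G × Bool, mcK φ σ u w v * f u * g w

theorem mulHK_apply_false (hφ : Function.Involutive φ) (f g : G × Bool → k) (c : G) :
    mulHK φ σ f g (c, false) =
      σ c * f (c, true) * g (φ c, true) + f (c, false) * g (c, false) := by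
  simp [mulHK, mcK, Fintype.sum_prod_type, ite_and, ← hφ.eq_iff, Finset.sum_add_distrib]

theorem mulHK_apply_true (hφ : Function.Involutive φ) (f g : G × Bool → k) (c : G) :
    mulHK φ σ f g (c, true) = f (c, false) * g (c, true) + f (c, true) * g (φ c, false) := by
  simp [mulHK, mcK, Fintype.sum_prod_type, ite_and, ← hφ.eq_iff, Finset.sum_add_distrib]

theorem mulHK_oneHK (hφ : Function.Involutive φ) (f : G × Bool → k) :
    mulHK φ σ f oneHK = f := by
  ext ⟨c, _ | _⟩ <;> simp [mulHK_apply_false, mulHK_apply_true, hφ, oneHK]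

theorem oneHK_mulHK (hφ : Function.Involutive φ) (f : G × Bool → k) :
    mulHK φ σ oneHK f = f := by
  ext ⟨c, _ | _⟩ <;> simp [mulHK_apply_false, mulHK_apply_true, hφ, oneHK]

theorem mulHK_assoc (hφ : Function.Involutive φ) (hσ : ∀ g, σ (φ g) = σ g)
    (f g h : G × Bool → k) :
    mulHK φ σ (mulHK φ σ f g) h = mulHK φ σ f (mulHK φ σ g h) := by
  ext ⟨c, _ | _⟩ <;> simp only [mulHK_apply_false hφ, mulHK_apply_true hφ, hφ c, hσ] <;> ring

theorem zero_mulHK (g : G × Bool → k) : mulHK φ σ 0 g = 0 := by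
  ext; simp [mulHK]

theorem mulHK_zero (f : G × Bool → k) : mulHK φ σ f 0 = 0 := by
  ext; simp [mulHK]

theorem add_mulHK (f f' g : G × Bool → k) :
    mulHK φ σ (f + f') g = mulHK φ σ f g + mulHK φ σ f' g := by
  ext; simp only [mulHK, Pi.add_apply, mul_add, add_mul, Finset.sum_add_distrib]

theorem mulHK_add (f g g' : G × Bool → k) :
    mulHK φ σ f (g + g') = mulHK φ σ f g + mulHK φ σ f g' := by
  ext; simp only [mulHK, Pi.add_apply, mul_add, Finset.sum_add_distrib]

theorem sub_mulHK (f f' g : G × Bool → k) :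
    mulHK φ σ (f - f') g = mulHK φ σ f g - mulHK φ σ f' g := by
  ext; simp only [mulHK, Pi.sub_apply, mul_sub, sub_mul, Finset.sum_sub_distrib]

theorem mulHK_sub (f g g' : G × Bool → k) :
    mulHK φ σ f (g - g') = mulHK φ σ f g - mulHK φ σ f g' := by
  ext; simp only [mulHK, Pi.sub_apply, mul_sub, Finset.sum_sub_distrib]

theorem mulHK_smul_left (f g : G × Bool → k) (a : k) (v : G × Bool) :
    mulHK φ σ (fun y => a * f y) g v = a * mulHK φ σ f g v := by
  simp only [mulHK, Finset.mul_sum]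
  exact Finset.sum_congr rfl fun _ _ => Finset.sum_congr rfl fun _ _ => by ring

theorem mulHK_smul_right (f g : G × Bool → k) (a : k) (v : G × Bool) :
    mulHK φ σ f (fun y => a * g y) v = a * mulHK φ σ f g v := by
  simp only [mulHK, Finset.mul_sum]
  exact Finset.sum_congr rfl fun _ _ => Finset.sum_congr rfl fun _ _ => by ring

theorem mulHK_sum_left {ι : Type*} (s : Finset ι) (f : ι → G × Bool → k) (g : G × Bool → k)
    (v : G × Bool) :
    mulHK φ σ (fun y => ∑ j ∈ s, f j y) g v = ∑ j ∈ s, mulHK φ σ (f j) g v := by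
  simp only [mulHK, Finset.mul_sum, Finset.sum_mul]
  exact (Finset.sum_comm.trans (Finset.sum_congr rfl fun _ _ => Finset.sum_comm)).symm

theorem mulHK_sum_right {ι : Type*} (s : Finset ι) (f : G × Bool → k) (g : ι → G × Bool → k)
    (v : G × Bool) :
    mulHK φ σ f (fun y => ∑ j ∈ s, g j y) v = ∑ j ∈ s, mulHK φ σ f (g j) v := by
  simp only [mulHK, Finset.mul_sum]
  exact (Finset.sum_comm.trans (Finset.sum_congr rfl fun _ _ => Finset.sum_comm)).symm

theorem sum_mcK_mul_mul (f g : G × Bool → k) (v : G × Bool) :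
    ∑ u : G × Bool, ∑ w : G × Bool, mcK φ σ u w v * (f u * g w) = mulHK φ σ f g v := by
  simp only [mulHK, mul_assoc]

theorem sum_mcK_mul_oneHK_mul_left (hφ : Function.Involutive φ) (g : G × Bool → k)
    (v : G × Bool) :
    ∑ u : G × Bool, ∑ w : G × Bool, mcK φ σ u w v * (oneHK u * g w) = g v := by
  simpa only [mulHK, mul_assoc] using congrFun (oneHK_mulHK (σ := σ) hφ g) v

theorem sum_mcK_mul_oneHK_mul_right (hφ : Function.Involutive φ) (f : G × Bool → k)
    (v : G × Bool) :
    ∑ u : G × Bool, ∑ w : G × Bool, mcK φ σ u w v * (oneHK w * f u) = f v := by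
  rw [← congrFun (mulHK_oneHK (σ := σ) hφ f) v]
  exact Finset.sum_congr rfl fun _ _ => Finset.sum_congr rfl fun _ _ => by ring

theorem mulHK_apply_of_left_true_eq_zero (hφ : Function.Involutive φ) {f : G × Bool → k}
    (hf : ∀ c, f (c, true) = 0) (g : G × Bool → k) (c : G) (β : Bool) :
    mulHK φ σ f g (c, β) = f (c, false) * g (c, β) := by
  cases β <;> simp [mulHK_apply_false hφ, mulHK_apply_true hφ, hf]

theorem mulHK_apply_of_right_true_eq_zero (hφ : Function.Involutive φ) (f : G × Bool → k)
    {g : G × Bool → k} (hg : ∀ c, g (c, true) = 0) (c : G) (β : Bool) :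
    mulHK φ σ f g (c, β) = f (c, β) * g (if β then φ c else c, false) := by
  cases β <;> simp [mulHK_apply_false hφ, mulHK_apply_true hφ, hg]

end Algebra

section Tensor

variable {k G : Type*} [Field k] [Fintype G] [DecidableEq G] {φ : G → G} {σ : G → kˣ}

theorem mul2K_apply_eq_sum_mulHK_snd (F F' : (G × Bool) × (G × Bool) → k) (v₁ v₂ : G × Bool) :
    mul2K φ σ F F' (v₁, v₂) = ∑ u₁ : G × Bool, ∑ w₁ : G × Bool,
      mcK φ σ u₁ w₁ v₁ * mulHK φ σ (fun y => F (u₁, y)) (fun y => F' (w₁, y)) v₂ := by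
  simp only [mul2K, mulHK, Fintype.sum_prod_type (α₁ := G × Bool), Finset.mul_sum]
  refine Finset.sum_congr rfl fun u₁ _ => ?_
  rw [Finset.sum_comm]
  exact Finset.sum_congr rfl fun _ _ => Finset.sum_congr rfl fun _ _ =>
    Finset.sum_congr rfl fun _ _ => by ring

theorem mul2K_apply_eq_sum_mulHK_fst (F F' : (G × Bool) × (G × Bool) → k) (v₁ v₂ : G × Bool) :
    mul2K φ σ F F' (v₁, v₂) = ∑ u₂ : G × Bool, ∑ w₂ : G × Bool,
      mcK φ σ u₂ w₂ v₂ * mulHK φ σ (fun y => F (y, u₂)) (fun y => F' (y, w₂)) v₁ := by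
  have hswap : mul2K φ σ F F' (v₁, v₂) =
      mul2K φ σ (fun p => F (p.2, p.1)) (fun p => F' (p.2, p.1)) (v₂, v₁) := by
    refine Fintype.sum_equiv (Equiv.prodComm _ _) _ _ fun u => ?_
    refine Fintype.sum_equiv (Equiv.prodComm _ _) _ _ fun w => ?_
    simp only [Equiv.prodComm_apply, Prod.fst_swap, Prod.snd_swap]
    ring
  rw [hswap, mul2K_apply_eq_sum_mulHK_snd]

theorem mul3K_apply_eq_sum_mulHK (F F' : (G × Bool) × (G × Bool) × (G × Bool) → k)
    (v₁ v₂ v₃ : G × Bool) :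
    mul3K φ σ F F' (v₁, v₂, v₃) = ∑ u₁ : G × Bool, ∑ w₁ : G × Bool, mcK φ σ u₁ w₁ v₁ *
      ∑ u₂ : G × Bool, ∑ w₂ : G × Bool, mcK φ σ u₂ w₂ v₂ *
        mulHK φ σ (fun y => F (u₁, u₂, y)) (fun y => F' (w₁, w₂, y)) v₃ := by
  simp only [mul3K, mulHK, Fintype.sum_prod_type (α₁ := G × Bool), Finset.mul_sum]
  refine Finset.sum_congr rfl fun u₁ _ => ?_
  conv_lhs => enter [2, u₂]; rw [Finset.sum_comm]
  rw [Finset.sum_comm]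
  refine Finset.sum_congr rfl fun w₁ _ => Finset.sum_congr rfl fun u₂ _ => ?_
  rw [Finset.sum_comm]
  exact Finset.sum_congr rfl fun _ _ => Finset.sum_congr rfl fun _ _ =>
    Finset.sum_congr rfl fun _ _ => by ring

theorem mul2K_apply_of_left_true_eq_zero (hφ : Function.Involutive φ)
    {F : (G × Bool) × (G × Bool) → k} (hF : ∀ u w, u.2 = true ∨ w.2 = true → F (u, w) = 0)
    (F' : (G × Bool) × (G × Bool) → k) (m₁ m₂ : G) (β₁ β₂ : Bool) :
    mul2K φ σ F F' ((m₁, β₁), (m₂, β₂)) =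
      F ((m₁, false), (m₂, false)) * F' ((m₁, β₁), (m₂, β₂)) := by
  have hsnd : ∀ u w : G × Bool, mulHK φ σ (fun y => F (u, y)) (fun y => F' (w, y)) (m₂, β₂) =
      F (u, (m₂, false)) * F' (w, (m₂, β₂)) := fun u _ =>
    mulHK_apply_of_left_true_eq_zero hφ (fun c => hF u (c, true) (Or.inr rfl)) _ m₂ β₂
  simp only [mul2K_apply_eq_sum_mulHK_snd, hsnd]
  exact (sum_mcK_mul_mul _ _ _).trans
    (mulHK_apply_of_left_true_eq_zero hφ (fun c => hF (c, true) _ (Or.inl rfl)) _ m₁ β₁)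

theorem mul2K_apply_of_right_true_eq_zero (hφ : Function.Involutive φ)
    (F : (G × Bool) × (G × Bool) → k) {F' : (G × Bool) × (G × Bool) → k}
    (hF' : ∀ u w, u.2 = true ∨ w.2 = true → F' (u, w) = 0) (m₁ m₂ : G) (β₁ β₂ : Bool) :
    mul2K φ σ F F' ((m₁, β₁), (m₂, β₂)) =
      F ((m₁, β₁), (m₂, β₂)) *
        F' ((if β₁ then φ m₁ else m₁, false), (if β₂ then φ m₂ else m₂, false)) := by
  have hsnd : ∀ u w : G × Bool, mulHK φ σ (fun y => F (u, y)) (fun y => F' (w, y)) (m₂, β₂) =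
      F (u, (m₂, β₂)) * F' (w, (if β₂ then φ m₂ else m₂, false)) := fun _ w =>
    mulHK_apply_of_right_true_eq_zero hφ _ (fun c => hF' w (c, true) (Or.inr rfl)) m₂ β₂
  simp only [mul2K_apply_eq_sum_mulHK_snd, hsnd]
  exact (sum_mcK_mul_mul _ _ _).trans
    (mulHK_apply_of_right_true_eq_zero hφ _ (fun c => hF' (c, true) _ (Or.inl rfl)) m₁ β₁)

theorem mul3K_R13K_R23K_apply (hφ : Function.Involutive φ) (R : (G × Bool) × (G × Bool) → k)
    (v₁ v₂ v₃ : G × Bool) :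
    mul3K φ σ (R13K R) (R23K R) (v₁, v₂, v₃) =
      mulHK φ σ (fun y => R (v₁, y)) (fun y => R (v₂, y)) v₃ := by
  have hlegs : ∀ u₁ u₂ w₁ w₂ : G × Bool,
      mulHK φ σ (fun y => R13K R (u₁, u₂, y)) (fun y => R23K R (w₁, w₂, y)) v₃ =
        oneHK u₂ * (oneHK w₁ * mulHK φ σ (fun y => R (u₁, y)) (fun y => R (w₂, y)) v₃) := by
    intro u₁ u₂ w₁ w₂
    simp_rw [R13K, R23K, mul_comm (R _) (oneHK _)]
    rw [mulHK_smul_left, mulHK_smul_right]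
  simp only [mul3K_apply_eq_sum_mulHK, hlegs, sum_mcK_mul_oneHK_mul_left hφ
    (fun w₂ => oneHK _ * mulHK φ σ (fun y => R (_, y)) (fun y => R (w₂, y)) v₃)]
  exact sum_mcK_mul_oneHK_mul_right hφ (fun u₁ => mulHK φ σ (fun y => R (u₁, y)) _ v₃) v₁

theorem mul3K_R13K_R12K_apply (hφ : Function.Involutive φ) (R : (G × Bool) × (G × Bool) → k)
    (v₁ v₂ v₃ : G × Bool) :
    mul3K φ σ (R13K R) (R12K R) (v₁, v₂, v₃) =
      mulHK φ σ (fun y => R (y, v₃)) (fun y => R (y, v₂)) v₁ := by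
  have hlegs : ∀ u₁ u₂ w₁ w₂ : G × Bool,
      mulHK φ σ (fun y => R13K R (u₁, u₂, y)) (fun y => R12K R (w₁, w₂, y)) v₃ =
        oneHK u₂ * (R (w₁, w₂) * R (u₁, v₃)) := by
    intro u₁ u₂ w₁ w₂
    simp_rw [R13K, R12K, mul_comm _ (oneHK u₂)]
    rw [mulHK_smul_left, mulHK_smul_right, congrFun (mulHK_oneHK hφ _)]
  simp only [mul3K_apply_eq_sum_mulHK, hlegs,
    sum_mcK_mul_oneHK_mul_left hφ (fun w₂ => R (_, w₂) * R (_, v₃))]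
  exact Finset.sum_congr rfl fun _ _ => Finset.sum_congr rfl fun _ _ => by ring

end Tensor

section QuasitriangularEquations

variable {k G : Type*} [Field k] [CommGroup G] [Fintype G] [DecidableEq G] {φ : G → G}
  {σ : G → kˣ} {τ : G → G → kˣ} {R : (G × Bool) × (G × Bool) → k}

variable (τ R) in
theorem DelIdK_apply (a b : G) (β₁ β₂ : Bool) (v : G × Bool) :
    DelIdK τ R ((a, β₁), (b, β₂), v) =
      if β₁ = β₂ then (if β₁ then (τ a b : k) else 1) * R ((a * b, β₁), v) else 0 := by
  cases β₁ <;> cases β₂ <;> simp [DelIdK, Dcoef, Fintype.sum_prod_type]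

variable (τ R) in
theorem IdDelK_apply (v : G × Bool) (b c : G) (β₂ β₃ : Bool) :
    IdDelK τ R (v, (b, β₂), (c, β₃)) =
      if β₂ = β₃ then (if β₂ then (τ b c : k) else 1) * R (v, (b * c, β₂)) else 0 := by
  cases β₂ <;> cases β₃ <;> simp [IdDelK, Dcoef, Fintype.sum_prod_type]

theorem mulHK_rows (hφ : Function.Involutive φ)
    (hQT1 : DelIdK τ R = mul3K φ σ (R13K R) (R23K R)) (a b : G) (β₁ β₂ : Bool) (v : G × Bool) :
    mulHK φ σ (fun y => R ((a, β₁), y)) (fun y => R ((b, β₂), y)) v =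
      if β₁ = β₂ then (if β₁ then (τ a b : k) else 1) * R ((a * b, β₁), v) else 0 := by
  rw [← mul3K_R13K_R23K_apply hφ, ← hQT1, DelIdK_apply]

theorem mulHK_cols (hφ : Function.Involutive φ)
    (hQT2 : IdDelK τ R = mul3K φ σ (R13K R) (R12K R)) (b c : G) (β₂ β₃ : Bool) (v : G × Bool) :
    mulHK φ σ (fun y => R (y, (c, β₃))) (fun y => R (y, (b, β₂))) v =
      if β₂ = β₃ then (if β₂ then (τ b c : k) else 1) * R (v, (b * c, β₂)) else 0 := by
  rw [← mul3K_R13K_R12K_apply hφ, ← hQT2, IdDelK_apply]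

variable (τ) in
theorem DeltaMap_single_apply (g : G) (p : (G × Bool) × (G × Bool)) :
    DeltaMap τ (fun v => if v = (g, false) then (1 : k) else 0) p =
      if p.1.2 = false ∧ p.2.2 = false ∧ p.1.1 * p.2.1 = g then 1 else 0 := by
  simp [DeltaMap, Dcoef]

theorem mul_eq_of_R_ne_zero (hφ : Function.Involutive φ)
    (hQT3 : ∀ f : G × Bool → k,
      mul2K φ σ (fun p => DeltaMap τ f (p.2, p.1)) R = mul2K φ σ R (DeltaMap τ f))
    {m₁ m₂ : G} {β₁ β₂ : Bool} (hR : R ((m₁, β₁), (m₂, β₂)) ≠ 0) :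
    (if β₁ then φ m₁ else m₁) * (if β₂ then φ m₂ else m₂) = m₁ * m₂ := by
  have h := congrFun (hQT3 fun v => if v = (m₁ * m₂, false) then 1 else 0) ((m₁, β₁), (m₂, β₂))
  rw [mul2K_apply_of_left_true_eq_zero hφ ?_, mul2K_apply_of_right_true_eq_zero hφ _ ?_] at h
  · by_contra hne
    simp only [DeltaMap_single_apply, true_and, mul_comm m₂ m₁, if_true, one_mul] at h
    rw [if_neg hne, mul_zero] at h
    exact hR h
  all_goals rintro u w (h | h) <;> simp [DeltaMap_single_apply, h]

end QuasitriangularEquations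

section Counit

variable {k G : Type*} [Field k] [CommGroup G] [Fintype G] [DecidableEq G] {φ : G → G}
  {σ : G → kˣ} {τ : G → G → kˣ} {R R' : (G × Bool) × (G × Bool) → k}

theorem eq_zero_of_mulHK_rows_eq_zero (hφ : Function.Involutive φ) (hσ : ∀ g, σ (φ g) = σ g)
    (hRR' : mul2K φ σ R R' = one2K) {s : G × Bool → k}
    (hs : ∀ u, mulHK φ σ s (fun y => R (u, y)) = 0) : s = 0 := by
  have hone : (fun y => mul2K φ σ R R' ((1, false), y)) = oneHK := by
    ext y; simp [hRR', one2K, oneHK]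
  ext v
  rw [← mulHK_oneHK (σ := σ) hφ s, ← hone]
  simp only [mul2K_apply_eq_sum_mulHK_snd, mulHK_sum_right, mulHK_smul_right,
    ← mulHK_assoc hφ hσ, hs, zero_mulHK, Pi.zero_apply, mul_zero, Finset.sum_const_zero]

theorem eq_zero_of_mulHK_cols_eq_zero (hφ : Function.Involutive φ) (hσ : ∀ g, σ (φ g) = σ g)
    (hR'R : mul2K φ σ R' R = one2K) {s : G × Bool → k}
    (hs : ∀ w, mulHK φ σ (fun y => R (y, w)) s = 0) : s = 0 := by
  have hone : (fun y => mul2K φ σ R' R (y, (1, false))) = oneHK := by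
    ext y; simp [hR'R, one2K, oneHK]
  ext v
  rw [← oneHK_mulHK (σ := σ) hφ s, ← hone]
  simp only [mul2K_apply_eq_sum_mulHK_fst, mulHK_sum_left, mulHK_smul_left,
    mulHK_assoc hφ hσ, hs, mulHK_zero, Pi.zero_apply, mul_zero, Finset.sum_const_zero]

/- With `ε(e_g x^β) = δ_{g,1}`, the next two statements are `(ε ⊗ id)(R) = 1` and
`(id ⊗ ε)(R) = 1`. -/
theorem counit_fst_R (hφ : Function.Involutive φ) (hσ : ∀ g, σ (φ g) = σ g)
    (hτ : ∀ g, τ 1 g = 1) (hRR' : mul2K φ σ R R' = one2K)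
    (hQT1 : DelIdK τ R = mul3K φ σ (R13K R) (R23K R)) (y : G × Bool) :
    R ((1, false), y) + R ((1, true), y) = oneHK y := by
  have h := eq_zero_of_mulHK_rows_eq_zero hφ hσ hRR'
    (s := (fun y => R ((1, false), y)) + (fun y => R ((1, true), y)) - oneHK) ?_
  · simpa [sub_eq_zero] using congrFun h y
  rintro ⟨b, β⟩
  ext v
  rw [sub_mulHK, add_mulHK, oneHK_mulHK hφ]
  cases β <;> simp [mulHK_rows hφ hQT1, hτ]

theorem counit_snd_R (hφ : Function.Involutive φ) (hσ : ∀ g, σ (φ g) = σ g)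
    (hτ : ∀ g, τ 1 g = 1) (hR'R : mul2K φ σ R' R = one2K)
    (hQT2 : IdDelK τ R = mul3K φ σ (R13K R) (R12K R)) (y : G × Bool) :
    R (y, (1, false)) + R (y, (1, true)) = oneHK y := by
  have h := eq_zero_of_mulHK_cols_eq_zero hφ hσ hR'R
    (s := (fun y => R (y, (1, false))) + (fun y => R (y, (1, true))) - oneHK) ?_
  · simpa [sub_eq_zero] using congrFun h y
  rintro ⟨c, β⟩
  ext v
  rw [mulHK_sub, mulHK_add, mulHK_oneHK hφ]
  cases β <;> simp [mulHK_cols hφ hQT2, hτ]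

end Counit

theorem eq_zero_of_odd_card_of_xor {A G : Type*} [CommRing A] [Group G] [Fintype G]
    (hodd : Odd (Fintype.card G)) {γ : G → A} (hidem : ∀ c, γ c * γ c = γ c)
    (hxor : ∀ b c, γ (b * c) = γ b + γ c - 2 * (γ b * γ c)) (c : G) : γ c = 0 := by
  have hsq : ∀ c, γ (c * c) = 0 := fun c => by rw [hxor, hidem]; ring
  have hpow : ∀ m : ℕ, γ (c ^ (2 * m + 1)) = γ c := by
    intro m
    induction m with
    | zero => simp
    | succ m ih =>
      rw [show 2 * (m + 1) + 1 = (2 * m + 1) + 2 by ring, pow_add, sq, hxor, ih, hsq]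
      ring
  obtain ⟨m, hm⟩ := hodd
  rw [← hpow m, ← hm, pow_card_eq_one, ← mul_one 1, hsq]

section Vanishing

variable {k G : Type*} [Field k] [CommGroup G] [Fintype G] [DecidableEq G] {φ : G → G}
  {σ : G → kˣ} {τ : G → G → kˣ} {R : (G × Bool) × (G × Bool) → k}

theorem R_one_true_true_eq_zero (hφ : Function.Involutive φ) (hφ1 : φ 1 = 1) (hne : φ ≠ id)
    (hτ : ∀ g, τ 1 g = 1) (hQT1 : DelIdK τ R = mul3K φ σ (R13K R) (R23K R))
    (hQT2 : IdDelK τ R = mul3K φ σ (R13K R) (R12K R))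
    (hQT3 : ∀ f : G × Bool → k,
      mul2K φ σ (fun p => DeltaMap τ f (p.2, p.1)) R = mul2K φ σ R (DeltaMap τ f))
    (hε : ∀ y, R ((1, false), y) + R ((1, true), y) = oneHK y) (c : G) :
    R ((1, true), (c, true)) = 0 := by
  have hidem : ∀ c, σ c * R ((1, true), (c, true)) * R ((1, true), (φ c, true)) +
      R ((1, true), (c, false)) * R ((1, true), (c, false)) = R ((1, true), (c, false)) :=
    fun c => by simpa [mulHK_apply_false hφ, hτ] using mulHK_rows hφ hQT1 1 1 true true (c, false)
  have hδ_mul : ∀ b c, R ((1, true), (c, true)) * (1 - 2 * R ((1, true), (b, false))) = 0 := by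
    intro b c
    have h := mulHK_cols hφ hQT2 b c false true (1, true)
    have hb := hε (b, false)
    have hc := hε (c, true)
    simp only [mulHK_apply_true hφ, hφ1, Bool.false_eq_true, ↓reduceIte, oneHK,
      Bool.true_eq_false] at h hb hc
    linear_combination h - R ((1, true), (b, false)) * hc - R ((1, true), (c, true)) * hb
  by_contra hc
  have hhalf : ∀ b, 1 - 2 * R ((1, true), (b, false)) = 0 :=
    fun b => (mul_eq_zero.mp (hδ_mul b c)).resolve_left hc
  have hall : ∀ d, R ((1, true), (d, true)) ≠ 0 := by
    intro d hd
    have h := hidem d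
    rw [hd, mul_zero, zero_mul, zero_add] at h
    have h10 : (1 : k) = 0 := by
      linear_combination (1 - 2 * R ((1, true), (d, false))) * hhalf d - 4 * h
    exact one_ne_zero h10
  exact hne (funext fun d => by simpa [hφ1] using mul_eq_of_R_ne_zero hφ hQT3 (hall d))

theorem R_one_true_false_eq_zero (hodd : Odd (Fintype.card G)) (hφ : Function.Involutive φ)
    (hφ1 : φ 1 = 1) (hτ : ∀ g, τ 1 g = 1) (hQT1 : DelIdK τ R = mul3K φ σ (R13K R) (R23K R))
    (hQT2 : IdDelK τ R = mul3K φ σ (R13K R) (R12K R))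
    (hε : ∀ y, R ((1, false), y) + R ((1, true), y) = oneHK y)
    (hδ : ∀ c, R ((1, true), (c, true)) = 0) (c : G) :
    R ((1, true), (c, false)) = 0 := by
  refine eq_zero_of_odd_card_of_xor hodd (γ := fun c => R ((1, true), (c, false)))
    (fun c => ?_) (fun b c => ?_) c
  · simpa [mulHK_apply_false hφ, hτ, hδ] using mulHK_rows hφ hQT1 1 1 true true (c, false)
  · have h := mulHK_cols hφ hQT2 b c false false (1, true)
    have hb := hε (b, false)
    have hc := hε (c, false)
    simp only [mulHK_apply_true hφ, hφ1, ↓reduceIte, Bool.false_eq_true, one_mul, oneHK] at h hb hc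
    linear_combination -h + R ((1, true), (b, false)) * hc + R ((1, true), (c, false)) * hb

theorem R_true_eq_zero (hφ : Function.Involutive φ) (hτ : ∀ g, τ 1 g = 1)
    (hQT1 : DelIdK τ R = mul3K φ σ (R13K R) (R23K R)) (hone : ∀ y, R ((1, true), y) = 0)
    (b : G) (y : G × Bool) : R ((b, true), y) = 0 := by
  have h := mulHK_rows hφ hQT1 1 b true true y
  rw [show (fun y => R ((1, true), y)) = 0 from funext hone, zero_mulHK] at h
  simpa [hτ, eq_comm] using h

theorem R_false_true_eq_zero (hφ : Function.Involutive φ) (hne : φ ≠ id)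
    (hQT2 : IdDelK τ R = mul3K φ σ (R13K R) (R12K R))
    (hQT3 : ∀ f : G × Bool → k,
      mul2K φ σ (fun p => DeltaMap τ f (p.2, p.1)) R = mul2K φ σ R (DeltaMap τ f))
    (hε : ∀ y, R (y, (1, false)) + R (y, (1, true)) = oneHK y)
    (hD : ∀ b c, R ((b, true), (c, true)) = 0) (a c : G) : R ((a, false), (c, true)) = 0 := by
  have hB_mul : ∀ c, R ((a, false), (c, true)) * (1 - R ((a, false), (1, true))) = 0 := by
    intro c
    have h := mulHK_cols hφ hQT2 1 c false true (a, false)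
    have ha := hε (a, false)
    simp only [mulHK_apply_false hφ, hD, zero_mul, mul_zero, zero_add, Bool.false_eq_true,
      ↓reduceIte, oneHK] at h ha
    linear_combination h - R ((a, false), (c, true)) * ha
  by_cases h1 : R ((a, false), (1, true)) = 1
  · have hall : ∀ d, R ((a, false), (d, true)) ≠ 0 := by
      intro d hd
      have h := mulHK_cols hφ hQT2 d d⁻¹ true true (a, false)
      simp only [mulHK_apply_false hφ, hd, mul_zero, hD, add_zero, ↓reduceIte, mul_inv_cancel, h1,
        mul_one] at h
      exact (τ d d⁻¹).ne_zero h.symm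
    exact absurd (funext fun d => by simpa using mul_eq_of_R_ne_zero hφ hQT3 (hall d)) hne
  · exact (mul_eq_zero.mp (hB_mul c)).resolve_right (sub_ne_zero.mpr (Ne.symm h1))

end Vanishing

theorem odd_order_R_trivial_general {k G : Type*} [Field k] [CommGroup G] [Fintype G]
    [DecidableEq G] (φ : G → G)
    (hhom : ∀ g h : G, φ (g * h) = φ g * φ h) (hinv : ∀ g : G, φ (φ g) = g)
    (hne : φ ≠ id)
    (σ : G → kˣ) (τ : G → G → kˣ)
    (hτ1' : ∀ g : G, τ 1 g = 1)
    (hσx : ∀ g : G, σ (φ g) = σ g)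
    (hodd : Odd (Fintype.card G))
    (R : (G × Bool) × (G × Bool) → k)
    (hR : ∃ R' : (G × Bool) × (G × Bool) → k,
      mul2K φ σ R R' = one2K ∧ mul2K φ σ R' R = one2K)
    (hQT1 : DelIdK τ R = mul3K φ σ (R13K R) (R23K R))
    (hQT2 : IdDelK τ R = mul3K φ σ (R13K R) (R12K R))
    (hQT3 : ∀ f : G × Bool → k,
      mul2K φ σ (fun p => DeltaMap τ f (p.2, p.1)) R = mul2K φ σ R (DeltaMap τ f)) :
    ∃ w : G → G → k, ∀ p : (G × Bool) × (G × Bool),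
      R p = if p.1.2 = false ∧ p.2.2 = false then w p.1.1 p.2.1 else 0 := by
  obtain ⟨R', hRR', hR'R⟩ := hR
  have hφ1 : φ 1 = 1 := (MonoidHom.mk' φ hhom).map_one
  have hε := counit_fst_R hinv hσx hτ1' hRR' hQT1
  have hδ := R_one_true_true_eq_zero hinv hφ1 hne hτ1' hQT1 hQT2 hQT3 hε
  have hγ := R_one_true_false_eq_zero hodd hinv hφ1 hτ1' hQT1 hQT2 hε hδ
  have hC : ∀ b y, R ((b, true), y) = 0 :=
    R_true_eq_zero hinv hτ1' hQT1 fun ⟨c, β⟩ => by cases β; exacts [hγ c, hδ c]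
  have hB := R_false_true_eq_zero hinv hne hQT2 hQT3 (counit_snd_R hinv hσx hτ1' hR'R hQT2)
    fun b c => hC b (c, true)
  refine ⟨fun g h => R ((g, false), (h, false)), ?_⟩
  rintro ⟨⟨g, _ | _⟩, ⟨h, _ | _⟩⟩ <;> simp [hB, hC]

/-- Let `H = k^G #_{σ,τ} kZ₂` with `|G|` odd.  Then every quasitriangular structure
(universal `R`-matrix) on `H` is of trivial form `R = ∑ w(g,h) e_g ⊗ e_h`. -/
theorem odd_order_R_trivial {k G : Type*} [Field k] [CommGroup G] [Fintype G]
    [DecidableEq G] (φ : G → G)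
    (hhom : ∀ g h : G, φ (g * h) = φ g * φ h) (hinv : ∀ g : G, φ (φ g) = g)
    (hne : φ ≠ id)
    (σ : G → kˣ) (τ : G → G → kˣ)
    (hcoc : ∀ g h l : G, τ g h * τ (g * h) l = τ h l * τ g (h * l))
    (hτ1 : ∀ g : G, τ g 1 = 1) (hτ1' : ∀ g : G, τ 1 g = 1)
    (hσ1 : σ 1 = 1) (hσx : ∀ g : G, σ (φ g) = σ g)
    (hcompat : ∀ g h : G, σ (g * h) * (σ g)⁻¹ * (σ h)⁻¹ = τ g h * τ (φ g) (φ h))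
    (hodd : Odd (Fintype.card G))
    (R : (G × Bool) × (G × Bool) → k)
    (hR : ∃ R' : (G × Bool) × (G × Bool) → k,
      mul2K φ σ R R' = one2K ∧ mul2K φ σ R' R = one2K)
    (hQT1 : DelIdK τ R = mul3K φ σ (R13K R) (R23K R))
    (hQT2 : IdDelK τ R = mul3K φ σ (R13K R) (R12K R))
    (hQT3 : ∀ f : G × Bool → k,
      mul2K φ σ (fun p => DeltaMap τ f (p.2, p.1)) R = mul2K φ σ R (DeltaMap τ f)) :
    ∃ w : G → G → k, ∀ p : (G × Bool) × (G × Bool),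
      R p = if p.1.2 = false ∧ p.2.2 = false then w p.1.1 p.2.1 else 0 :=
  odd_order_R_trivial_general φ hhom hinv hne σ τ hτ1' hσx hodd R hR hQT1 hQT2 hQT3
end

section
/- Let H = k^G #_{σ,τ} kZ₂ and suppose R = Σ w(g,h) e_g ⊗ e_h is a (trivial-form) quasitriangular structure on H. Then w is a bicharacter on G and satisfies w(g◁x, h◁x) = w(g,h)·η(g,h), where η(g,h) = τ(g,h)τ(h,g)^{-1}, for all g, h ∈ G. -/
/-!
Since `R` lies in `k^G ⊗ k^G`, multiplying by it on either side only rescales coefficients: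
`e_g` is an idempotent projecting onto the basis vectors with first index `g`, and
`(e_g x) e_h = δ_{g, h◁x} e_g x`. Evaluating `(Δ ⊗ id)(R) = R₁₃R₂₃` and `(id ⊗ Δ)(R) = R₁₃R₁₂`
at `e_{g₁} ⊗ e_{g₂} ⊗ e_h` gives the two multiplicativity laws of `w`, and evaluating
`Δᵒᵖ(e_{gh}x) R = R Δ(e_{gh}x)` at `e_g x ⊗ e_h x` gives
`τ(h,g) w(g◁x, h◁x) = w(g,h) τ(g,h)`.
-/

section StructureConstants

variable {k G : Type*} [Field k] [DecidableEq G] (φ : G → G) (σ : G → kˣ)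

/-- The group element `g ◁ xᵇ` attached to the basis index `(g, b)`. -/
def twistIndex (u : G × Bool) : G := if u.2 then φ u.1 else u.1

lemma mcK_false_left (g : G) (w v : G × Bool) :
    mcK φ σ (g, false) w v = if v = w ∧ w.1 = g then 1 else 0 := by
  obtain ⟨h, _ | _⟩ := w <;> simp only [mcK] <;> grind

lemma mcK_false_right (hφ : Function.Involutive φ) (u : G × Bool) (h : G) (v : G × Bool) :
    mcK φ σ u (h, false) v = if v = u ∧ h = twistIndex φ u then 1 else 0 := by
  obtain ⟨g, _ | _⟩ := u <;> simp only [mcK, twistIndex, if_true] <;>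
    grind [Function.Involutive]

end StructureConstants

section MulByDiagonal

variable {k G : Type*} [Field k] [Fintype G] [DecidableEq G] (φ : G → G) (σ : G → kˣ)

lemma mul2K_of_left_supp (F F' : (G × Bool) × (G × Bool) → k)
    (hF : ∀ u, F u ≠ 0 → u.1.2 = false ∧ u.2.2 = false) (v : (G × Bool) × (G × Bool)) :
    mul2K φ σ F F' v = F ((v.1.1, false), (v.2.1, false)) * F' v := by
  have hterm : ∀ u w : (G × Bool) × (G × Bool),
      mcK φ σ u.1 w.1 v.1 * mcK φ σ u.2 w.2 v.2 * F u * F' w =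
        if u = ((v.1.1, false), (v.2.1, false)) ∧ w = v then F u * F' w else 0 := by
    rintro ⟨⟨g₁, b₁⟩, ⟨g₂, b₂⟩⟩ w
    by_cases h0 : F ((g₁, b₁), (g₂, b₂)) = 0
    · simp [h0]
    obtain ⟨rfl, rfl⟩ := hF _ h0
    simp only [mcK_false_left]
    grind
  simp only [mul2K, hterm, ite_and, Finset.sum_ite_irrel, Finset.sum_const_zero,
    Fintype.sum_ite_eq']

lemma mul2K_of_right_supp (hφ : Function.Involutive φ) (F F' : (G × Bool) × (G × Bool) → k)
    (hF' : ∀ u, F' u ≠ 0 → u.1.2 = false ∧ u.2.2 = false) (v : (G × Bool) × (G × Bool)) :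
    mul2K φ σ F F' v = F v * F' ((twistIndex φ v.1, false), (twistIndex φ v.2, false)) := by
  have hterm : ∀ u w : (G × Bool) × (G × Bool),
      mcK φ σ u.1 w.1 v.1 * mcK φ σ u.2 w.2 v.2 * F u * F' w =
        if u = v ∧ w = ((twistIndex φ v.1, false), (twistIndex φ v.2, false))
        then F u * F' w else 0 := by
    intro u ⟨⟨h₁, b₁⟩, ⟨h₂, b₂⟩⟩
    by_cases h0 : F' ((h₁, b₁), (h₂, b₂)) = 0
    · simp [h0]
    obtain ⟨rfl, rfl⟩ := hF' _ h0
    simp only [mcK_false_right φ σ hφ]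
    grind
  simp only [mul2K, hterm, ite_and, Finset.sum_ite_irrel, Finset.sum_const_zero,
    Fintype.sum_ite_eq']

lemma mul3K_of_left_supp (F F' : (G × Bool) × (G × Bool) × (G × Bool) → k)
    (hF : ∀ u, F u ≠ 0 → u.1.2 = false ∧ u.2.1.2 = false ∧ u.2.2.2 = false)
    (v : (G × Bool) × (G × Bool) × (G × Bool)) :
    mul3K φ σ F F' v = F ((v.1.1, false), (v.2.1.1, false), (v.2.2.1, false)) * F' v := by
  have hterm : ∀ u w : (G × Bool) × (G × Bool) × (G × Bool),
      mcK φ σ u.1 w.1 v.1 * mcK φ σ u.2.1 w.2.1 v.2.1 * mcK φ σ u.2.2 w.2.2 v.2.2 *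
          F u * F' w =
        if u = ((v.1.1, false), (v.2.1.1, false), (v.2.2.1, false)) ∧ w = v
        then F u * F' w else 0 := by
    rintro ⟨⟨g₁, b₁⟩, ⟨g₂, b₂⟩, ⟨g₃, b₃⟩⟩ w
    by_cases h0 : F ((g₁, b₁), (g₂, b₂), (g₃, b₃)) = 0
    · simp [h0]
    obtain ⟨rfl, rfl, rfl⟩ := hF _ h0
    simp only [mcK_false_left]
    grind
  simp only [mul3K, hterm, ite_and, Finset.sum_ite_irrel, Finset.sum_const_zero,
    Fintype.sum_ite_eq']

end MulByDiagonal

lemma R13K_supp {k G : Type*} [Field k] {R : (G × Bool) × (G × Bool) → k}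
    (hR : ∀ u, R u ≠ 0 → u.1.2 = false ∧ u.2.2 = false)
    (t : (G × Bool) × (G × Bool) × (G × Bool)) (ht : R13K R t ≠ 0) :
    t.1.2 = false ∧ t.2.1.2 = false ∧ t.2.2.2 = false := by
  obtain ⟨h₁, h₂⟩ := hR _ (left_ne_zero_of_mul ht)
  exact ⟨h₁, by simpa [oneHK] using right_ne_zero_of_mul ht, h₂⟩

section Comultiplication

variable {k G : Type*} [Field k] [CommGroup G] [Fintype G] [DecidableEq G] (τ : G → G → kˣ)

lemma DelIdK_false_false (R : (G × Bool) × (G × Bool) → k) (a b : G) (c : G × Bool) :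
    DelIdK τ R ((a, false), (b, false), c) = R ((a * b, false), c) := by
  simp [DelIdK, Dcoef, Fintype.sum_prod_type]

lemma IdDelK_false_false (R : (G × Bool) × (G × Bool) → k) (a : G × Bool) (b c : G) :
    IdDelK τ R (a, (b, false), (c, false)) = R (a, (b * c, false)) := by
  simp [IdDelK, Dcoef, Fintype.sum_prod_type]

lemma DeltaMap_single (v u w : G × Bool) :
    DeltaMap τ (Pi.single v 1) (u, w) = Dcoef τ v u w := by
  simp [DeltaMap, Pi.single_apply]

end Comultiplication

theorem trivial_R_is_bicharacter_general {k G : Type*} [Field k] [CommGroup G] [Fintype G]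
    [DecidableEq G] (φ : G → G)
    (hinv : ∀ g : G, φ (φ g) = g)
    (σ : G → kˣ) (τ : G → G → kˣ)
    (w : G → G → k)
    (R : (G × Bool) × (G × Bool) → k)
    (hRdef : ∀ p : (G × Bool) × (G × Bool),
      R p = if p.1.2 = false ∧ p.2.2 = false then w p.1.1 p.2.1 else 0)
    (hQT1 : DelIdK τ R = mul3K φ σ (R13K R) (R23K R))
    (hQT2 : IdDelK τ R = mul3K φ σ (R13K R) (R12K R))
    (hQT3 : ∀ f : G × Bool → k,
      mul2K φ σ (fun p => DeltaMap τ f (p.2, p.1)) R = mul2K φ σ R (DeltaMap τ f)) :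
    (∀ g₁ g₂ h : G, w (g₁ * g₂) h = w g₁ h * w g₂ h) ∧
    (∀ g h₁ h₂ : G, w g (h₁ * h₂) = w g h₁ * w g h₂) ∧
    (∀ g h : G, w (φ g) (φ h) = w g h * ((τ g h * (τ h g)⁻¹ : kˣ) : k)) := by
  have hRsupp : ∀ u, R u ≠ 0 → u.1.2 = false ∧ u.2.2 = false := by
    intro u hu
    by_contra h
    exact hu (by rw [hRdef, if_neg h])
  refine ⟨fun g₁ g₂ h => ?_, fun g h₁ h₂ => ?_, fun g h => ?_⟩
  · have key := congrFun hQT1 ((g₁, false), (g₂, false), (h, false))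
    rw [DelIdK_false_false, mul3K_of_left_supp φ σ _ _ (R13K_supp hRsupp)] at key
    simpa [hRdef, R13K, R23K, oneHK] using key
  · have key := congrFun hQT2 ((g, false), (h₁, false), (h₂, false))
    rw [IdDelK_false_false, mul3K_of_left_supp φ σ _ _ (R13K_supp hRsupp)] at key
    simpa [hRdef, R13K, R12K, oneHK, mul_comm] using key
  · have key := congrFun (hQT3 (Pi.single (g * h, true) 1)) ((g, true), (h, true))
    rw [mul2K_of_right_supp φ σ hinv _ _ hRsupp, mul2K_of_left_supp φ σ _ _ hRsupp] at key
    simp only [DeltaMap_single, Dcoef, twistIndex, hRdef, mul_comm, and_self, if_true] at key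
    rw [Units.val_mul, Units.val_inv_eq_inv_val, ← mul_assoc,
      eq_mul_inv_iff_mul_eq₀ (τ h g).ne_zero]
    linear_combination key

/-- Suppose `R = ∑ w(g,h) e_g ⊗ e_h` (trivial form) is a quasitriangular structure on
`H = k^G #_{σ,τ} kZ₂`.  Then `w` is a bicharacter on `G` and satisfies
`w(g◁x, h◁x) = w(g,h)·η(g,h)` where `η(g,h) = τ(g,h)τ(h,g)⁻¹`. -/
theorem trivial_R_is_bicharacter {k G : Type*} [Field k] [CommGroup G] [Fintype G]
    [DecidableEq G] (φ : G → G)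
    (hhom : ∀ g h : G, φ (g * h) = φ g * φ h) (hinv : ∀ g : G, φ (φ g) = g)
    (hne : φ ≠ id)
    (σ : G → kˣ) (τ : G → G → kˣ)
    (hcoc : ∀ g h l : G, τ g h * τ (g * h) l = τ h l * τ g (h * l))
    (hτ1 : ∀ g : G, τ g 1 = 1) (hτ1' : ∀ g : G, τ 1 g = 1)
    (hσ1 : σ 1 = 1) (hσx : ∀ g : G, σ (φ g) = σ g)
    (hcompat : ∀ g h : G, σ (g * h) * (σ g)⁻¹ * (σ h)⁻¹ = τ g h * τ (φ g) (φ h))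
    (w : G → G → k)
    (R : (G × Bool) × (G × Bool) → k)
    (hRdef : ∀ p : (G × Bool) × (G × Bool),
      R p = if p.1.2 = false ∧ p.2.2 = false then w p.1.1 p.2.1 else 0)
    (hR : ∃ R' : (G × Bool) × (G × Bool) → k,
      mul2K φ σ R R' = one2K ∧ mul2K φ σ R' R = one2K)
    (hQT1 : DelIdK τ R = mul3K φ σ (R13K R) (R23K R))
    (hQT2 : IdDelK τ R = mul3K φ σ (R13K R) (R12K R))
    (hQT3 : ∀ f : G × Bool → k,
      mul2K φ σ (fun p => DeltaMap τ f (p.2, p.1)) R = mul2K φ σ R (DeltaMap τ f)) :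
    (∀ g₁ g₂ h : G, w (g₁ * g₂) h = w g₁ h * w g₂ h) ∧
    (∀ g h₁ h₂ : G, w g (h₁ * h₂) = w g h₁ * w g h₂) ∧
    (∀ g h : G, w (φ g) (φ h) = w g h * ((τ g h * (τ h g)⁻¹ : kˣ) : k)) :=
  trivial_R_is_bicharacter_general φ hinv σ τ w R hRdef hQT1 hQT2 hQT3
end
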